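/- arXiv:1304.7403 — 6 statements merged into one kernel-verified Lean document; each statement's English description precedes it below -/
import Mathlib

section
/- Let m ≥ 1 and n ≥ 1 be integers, let A be an m×n matrix with all entries in the real interval [0,1], and let x ∈ [0,1]^n be a vector with ∑_{i=1}^n x_i an integer. Assume that (Ax)_r ≤ 1 for every row r ∈ {1, …, m}. Then there exists a vector y ∈ {0,1}^n such that ∑_{i=1}^n y_i = ∑_{i=1}^n x_i and, for every row r ∈ {1, …, m}, (Ay)_r ≤ 1 + e·ln(2m)/ln(e·ln(2m)). -/
open Real Finset

set_option maxHeartbeats 1000000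

private lemma log_le_tangent {c x : ℝ} (hc : 0 < c) (hx : 0 < x) :
    Real.log x ≤ Real.log c + (x / c - 1) := by
  have h := Real.log_le_sub_one_of_pos (show (0:ℝ) < x / c by positivity)
  rw [Real.log_div hx.ne' hc.ne'] at h
  linarith

private lemma log_ge_tangent {c x : ℝ} (hc : 0 < c) (hx : 0 < x) :
    Real.log c + 1 - c / x ≤ Real.log x := by
  have h := Real.log_le_sub_one_of_pos (show (0:ℝ) < c / x by positivity)
  rw [Real.log_div hc.ne' hx.ne'] at h
  linarith

private lemma P_nonneg (u L K : ℝ) (hu : Real.log 2 ≤ u)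
    (hL : L = 1 + Real.log u) (hK : K = Real.log L) :
    0 ≤ L * (L - K + 1 + Real.log 2) +
      u * (Real.exp 1 * L - Real.exp 1 * K - L - Real.exp 1) := by
  have hEg : (2.7182818283 : ℝ) < Real.exp 1 := Real.exp_one_gt_d9
  have hEl : Real.exp 1 < 2.7182818286 := Real.exp_one_lt_d9
  have hl2g : (0.6931471803 : ℝ) < Real.log 2 := Real.log_two_gt_d9
  have hl2l : Real.log 2 < 0.6931471808 := Real.log_two_lt_d9
  have hu0 : (0:ℝ) < u := lt_of_lt_of_le (by linarith) hu
  have hL0 : (0.55 : ℝ) < L := by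
    have h1 : Real.log (Real.log 2) ≤ Real.log u :=
      Real.log_le_log (by linarith) hu
    have h2 : Real.log 1 + 1 - 1 / Real.log 2 ≤ Real.log (Real.log 2) :=
      log_ge_tangent one_pos (by linarith)
    rw [Real.log_one] at h2
    have h3 : 1 / Real.log 2 < 1.4429 := by
      rw [div_lt_iff₀ (by linarith)]; nlinarith
    nlinarith
  have hLpos : (0:ℝ) < L := by linarith
  have hKle : K ≤ L - 1 := by
    rw [hK]; exact Real.log_le_sub_one_of_pos hLpos
  have hueq : Real.exp (L - 1) = u := by
    rw [hL]; ring_nf; rw [Real.exp_log hu0]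
  have hLuE : (0:ℝ) ≤ L + u * Real.exp 1 :=
    add_nonneg hLpos.le (mul_nonneg hu0.le (Real.exp_pos 1).le)
  rcases le_or_gt (Real.exp 1 + Real.exp 1 * K + L - Real.exp 1 * L) 0 with hR | hR
  · have h1 : (0:ℝ) ≤ L - K + 1 + Real.log 2 := by linarith
    have h2 := mul_nonneg hLpos.le h1
    have h3 := mul_nonneg hu0.le (by linarith :
      (0:ℝ) ≤ Real.exp 1 * L - Real.exp 1 * K - L - Real.exp 1)
    linarith
  · have hKe' : Real.exp 1 * K ≤ L := by
      have h1 := log_le_tangent (Real.exp_pos 1) hLpos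
      rw [Real.log_exp] at h1
      have h2 : K ≤ L / Real.exp 1 := by rw [hK]; linarith
      calc Real.exp 1 * K ≤ Real.exp 1 * (L / Real.exp 1) :=
            mul_le_mul_of_nonneg_left h2 (Real.exp_pos 1).le
        _ = L := by field_simp
    have hKup : K ≤ 0.3678795 * L := by
      have h2 : K * Real.exp 1 ≤ L := by linarith
      have h3 : K ≤ L / Real.exp 1 := (le_div_iff₀ (Real.exp_pos 1)).mpr h2
      have h4 : L / Real.exp 1 ≤ 0.3678795 * L := by
        rw [div_le_iff₀ (Real.exp_pos 1)]; nlinarith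
      linarith
    have hLE : L * (Real.exp 1 - 2) < Real.exp 1 := by nlinarith [hKe', hR]
    have hLlt : L < 3.79 := by
      have h1 : L < Real.exp 1 / (Real.exp 1 - 2) :=
        (lt_div_iff₀ (by linarith)).mpr hLE
      have h2 : Real.exp 1 / (Real.exp 1 - 2) < 3.79 := by
        rw [div_lt_iff₀ (by linarith)]; linarith
      linarith
    rcases le_or_gt u 2.69 with hcase | hcase
    · have h1 : (0:ℝ) ≤ (L - 1 - K) * (L + u * Real.exp 1) :=
        mul_nonneg (by linarith) hLuE
      have h2 : (0:ℝ) ≤ L * (2 + Real.log 2 - u) :=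
        mul_nonneg hLpos.le (by linarith)
      nlinarith [h1, h2]
    · have hLlb : (1.989 : ℝ) < L := by
        have h2 : Real.log (Real.exp 1) + 1 - Real.exp 1 / u ≤ Real.log u :=
          log_ge_tangent (Real.exp_pos 1) hu0
        rw [Real.log_exp] at h2
        have h3 : Real.exp 1 / u < 1.0106 := by
          rw [div_lt_iff₀ hu0]; nlinarith
        linarith
      have hexphalfsq : Real.exp (1/2 : ℝ) * Real.exp (1/2 : ℝ) = Real.exp 1 := by
        rw [← Real.exp_add]; norm_num
      have hehpos := Real.exp_pos (1/2 : ℝ)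
      have hexphalf_ub : Real.exp (1/2 : ℝ) < 1.64873 := by nlinarith
      have hEE : Real.exp 1 * Real.exp 1 < 7.3890561 := by nlinarith
      rcases le_or_gt L 2.5 with hb | hb
      · -- piece [1.989, 2.5], c = 2, U = exp(3/2) < 4.4818
        have hKup2 : K ≤ 0.5 * L - 0.3068528 := by
          rw [hK]
          have h1 := log_le_tangent (show (0:ℝ) < 2 by norm_num) hLpos
          linarith
        have hUu : u ≤ Real.exp 1 * Real.exp (1/2 : ℝ) := by
          rw [← hueq, ← Real.exp_add]
          apply Real.exp_le_exp.mpr; linarith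
        have hU : u ≤ 4.4818 := by nlinarith
        have step1 : (0:ℝ) ≤ (0.5 * L - 0.3068528 - K) * (L + u * Real.exp 1) :=
          mul_nonneg (by linarith) hLuE
        have hRup : (0:ℝ) < Real.exp 1 * 0.6931472 + Real.exp 1 * (0.5 * L) + L
            - Real.exp 1 * L := by
          nlinarith [mul_nonneg (show (0:ℝ) ≤ 0.5 * L - 0.3068528 - K by linarith)
            (Real.exp_pos 1).le]
        have step2 : (0:ℝ) ≤ (4.4818 - u) * (Real.exp 1 * 0.6931472
            + Real.exp 1 * (0.5 * L) + L - Real.exp 1 * L) :=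
          mul_nonneg (by linarith) hRup.le
        have step3 : (0:ℝ) ≤ (Real.exp 1 - 2.7182818283)
            * (0.5 * 4.4818 * L - 0.6931472 * 4.4818) :=
          mul_nonneg (by linarith) (by linarith)
        have step4 : (0:ℝ) ≤ (Real.log 2 - 0.6931471803) * L :=
          mul_nonneg (by linarith) hLpos.le
        linarith [step1, step2, step3, step4, sq_nonneg (L - 1.989)]
      · -- pieces with c = e
        have hRup : (0:ℝ) < Real.exp 1 + Real.exp 1 * (0.3678795 * L) + L
            - Real.exp 1 * L := by
          nlinarith [mul_nonneg (show (0:ℝ) ≤ 0.3678795 * L - K by linarith)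
            (Real.exp_pos 1).le]
        have step1 : (0:ℝ) ≤ (0.3678795 * L - K) * (L + u * Real.exp 1) :=
          mul_nonneg (by linarith) hLuE
        have step4 : (0:ℝ) ≤ (Real.log 2 - 0.6931471803) * L :=
          mul_nonneg (by linarith) hLpos.le
        rcases le_or_gt L 3 with hb2 | hb2
        · -- piece [2.5, 3], U = exp 2 < 7.3891
          have hUu : u ≤ Real.exp 1 * Real.exp 1 := by
            rw [← hueq, ← Real.exp_add]
            apply Real.exp_le_exp.mpr; linarith
          have hU : u ≤ 7.3891 := by nlinarith
          have step2 : (0:ℝ) ≤ (7.3891 - u) * (Real.exp 1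
              + Real.exp 1 * (0.3678795 * L) + L - Real.exp 1 * L) :=
            mul_nonneg (by linarith) hRup.le
          have step3 : (0:ℝ) ≤ (Real.exp 1 - 2.7182818283)
              * (7.3891 * 0.6321205 * L - 7.3891) :=
            mul_nonneg (by linarith) (by linarith)
          linarith [step1, step2, step3, step4, sq_nonneg (L - 2.5)]
        · rcases le_or_gt L 3.5 with hb3 | hb3
          · -- piece [3, 3.5], U = exp (5/2) < 12.1826
            have hUu : u ≤ Real.exp 1 * Real.exp 1 * Real.exp (1/2 : ℝ) := by
              rw [← hueq, ← Real.exp_add, ← Real.exp_add]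
              apply Real.exp_le_exp.mpr; linarith
            have hU : u ≤ 12.1826 := by nlinarith [hEE, hexphalf_ub, hehpos]
            have step2 : (0:ℝ) ≤ (12.1826 - u) * (Real.exp 1
                + Real.exp 1 * (0.3678795 * L) + L - Real.exp 1 * L) :=
              mul_nonneg (by linarith) hRup.le
            have step3 : (0:ℝ) ≤ (Real.exp 1 - 2.7182818283)
                * (12.1826 * 0.6321205 * L - 12.1826) :=
              mul_nonneg (by linarith) (by linarith)
            linarith [step1, step2, step3, step4, sq_nonneg (L - 3)]
          · -- piece [3.5, 3.79], U = exp 3 < 20.0856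
            have hUu : u ≤ Real.exp 1 * Real.exp 1 * Real.exp 1 := by
              rw [← hueq, ← Real.exp_add, ← Real.exp_add]
              apply Real.exp_le_exp.mpr; linarith
            have hU : u ≤ 20.0856 := by nlinarith [hEE, hEl, hEg]
            have step2 : (0:ℝ) ≤ (20.0856 - u) * (Real.exp 1
                + Real.exp 1 * (0.3678795 * L) + L - Real.exp 1 * L) :=
              mul_nonneg (by linarith) hRup.le
            have step3 : (0:ℝ) ≤ (Real.exp 1 - 2.7182818283)
                * (20.0856 * 0.6321205 * L - 20.0856) :=
              mul_nonneg (by linarith) (by linarith)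
            linarith [step1, step2, step3, step4, sq_nonneg (L - 3.5)]

private lemma key_lemma (m : ℕ) (hm : 1 ≤ m) :
    Real.exp 1 ≤
      Real.exp 1 * Real.log (2 * (m:ℝ)) / Real.log (Real.exp 1 * Real.log (2 * (m:ℝ))) ∧
    Real.log (m:ℝ) +
      (Real.exp 1 * Real.log (2 * (m:ℝ)) / Real.log (Real.exp 1 * Real.log (2 * (m:ℝ))) - 1) ≤
      (1 + Real.exp 1 * Real.log (2 * (m:ℝ)) / Real.log (Real.exp 1 * Real.log (2 * (m:ℝ)))) *
      Real.log (Real.exp 1 * Real.log (2 * (m:ℝ)) /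
        Real.log (Real.exp 1 * Real.log (2 * (m:ℝ)))) := by
  have hm1 : (1:ℝ) ≤ (m:ℝ) := by exact_mod_cast hm
  set u := Real.log (2 * (m:ℝ)) with hudef
  have hu : Real.log 2 ≤ u := by
    apply Real.log_le_log (by norm_num)
    nlinarith
  have hl2g : (0.6931471803 : ℝ) < Real.log 2 := Real.log_two_gt_d9
  have hu0 : (0:ℝ) < u := by linarith
  set L := Real.log (Real.exp 1 * u) with hLdef0
  have hLdef : L = 1 + Real.log u := by
    rw [hLdef0, Real.log_mul (Real.exp_ne_zero 1) hu0.ne', Real.log_exp]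
  set K := Real.log L with hKdef
  have hLpos : (0:ℝ) < L := by
    have h1 : Real.log (Real.log 2) ≤ Real.log u := Real.log_le_log (by linarith) hu
    have h2 : Real.log 1 + 1 - 1 / Real.log 2 ≤ Real.log (Real.log 2) :=
      log_ge_tangent one_pos (by linarith)
    rw [Real.log_one] at h2
    have h3 : 1 / Real.log 2 < 1.4429 := by
      rw [div_lt_iff₀ (by linarith)]; nlinarith
    rw [hLdef]; linarith
  have hEu0 : (0:ℝ) < Real.exp 1 * u := mul_pos (Real.exp_pos 1) hu0
  set lam := Real.exp 1 * u / L with hlamdef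
  have hlamL : lam * L = Real.exp 1 * u := by
    rw [hlamdef]; exact div_mul_cancel₀ _ hLpos.ne'
  have hloglam : Real.log lam = L - K := by
    rw [hlamdef, Real.log_div hEu0.ne' hLpos.ne']
  have huL : L ≤ u := by
    rw [hLdef]
    have := Real.log_le_sub_one_of_pos hu0
    linarith
  have hlamge : Real.exp 1 ≤ lam := by
    rw [hlamdef, le_div_iff₀ hLpos]
    nlinarith [Real.exp_pos 1]
  refine ⟨hlamge, ?_⟩
  have hlogm : Real.log (m:ℝ) = u - Real.log 2 := by
    rw [hudef, Real.log_mul two_ne_zero (by positivity)]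
    ring
  have hP := P_nonneg u L K hu hLdef hKdef
  rw [hloglam, hlogm]
  have hmain : L * ((u - Real.log 2) + (lam - 1)) ≤ L * ((1 + lam) * (L - K)) := by
    have e1 : L * ((u - Real.log 2) + (lam - 1)) =
        L * (u - Real.log 2) + lam * L - L := by ring
    have e2 : L * ((1 + lam) * (L - K)) = L * (L - K) + (lam * L) * (L - K) := by ring
    rw [e1, e2, hlamL]
    nlinarith [hP]
  have := (mul_le_mul_iff_right₀ hLpos).mp hmain
  linarith

private lemma upd2_same_i {n : ℕ} (w : Fin n → ℝ) {i j : Fin n} (hij : i ≠ j) (a b : ℝ) :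
    (Function.update (Function.update w i a) j b) i = a := by
  rw [Function.update_of_ne hij, Function.update_self]

private lemma upd2_same_j {n : ℕ} (w : Fin n → ℝ) (i j : Fin n) (a b : ℝ) :
    (Function.update (Function.update w i a) j b) j = b :=
  Function.update_self _ _ _

private lemma upd2_other {n : ℕ} (w : Fin n → ℝ) {i j l : Fin n} (hli : l ≠ i) (hlj : l ≠ j)
    (a b : ℝ) : (Function.update (Function.update w i a) j b) l = w l := by
  rw [Function.update_of_ne hlj, Function.update_of_ne hli]

private lemma sum_split3 {n : ℕ} (f : Fin n → ℝ) {i j : Fin n} (hij : i ≠ j) :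
    ∑ l, f l = f i + (f j + ∑ l ∈ (Finset.univ.erase i).erase j, f l) := by
  rw [Finset.add_sum_erase _ f (Finset.mem_erase.mpr ⟨Ne.symm hij, Finset.mem_univ j⟩),
    Finset.add_sum_erase _ f (Finset.mem_univ i)]

private lemma prod_split3 {n : ℕ} (f : Fin n → ℝ) {i j : Fin n} (hij : i ≠ j) :
    ∏ l, f l = f i * (f j * ∏ l ∈ (Finset.univ.erase i).erase j, f l) := by
  rw [Finset.mul_prod_erase _ f (Finset.mem_erase.mpr ⟨Ne.symm hij, Finset.mem_univ j⟩),
    Finset.mul_prod_erase _ f (Finset.mem_univ i)]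

private lemma sum_upd2 {n : ℕ} (w : Fin n → ℝ) {i j : Fin n} (hij : i ≠ j) (a b : ℝ) :
    ∑ l, (Function.update (Function.update w i a) j b) l
      = (∑ l, w l) + (a - w i) + (b - w j) := by
  rw [sum_split3 _ hij, sum_split3 w hij, upd2_same_i w hij, upd2_same_j w i j]
  have : ∑ l ∈ (Finset.univ.erase i).erase j,
      (Function.update (Function.update w i a) j b) l
      = ∑ l ∈ (Finset.univ.erase i).erase j, w l := by
    refine Finset.sum_congr rfl fun l hl => ?_
    have hlj : l ≠ j := (Finset.mem_erase.mp hl).1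
    have hli : l ≠ i := (Finset.mem_erase.mp (Finset.mem_erase.mp hl).2).1
    exact upd2_other w hli hlj a b
  rw [this]; ring

private lemma prod_upd2 {n : ℕ} (w d : Fin n → ℝ) {i j : Fin n} (hij : i ≠ j) (a b : ℝ) :
    ∏ l, (1 + (Function.update (Function.update w i a) j b) l * d l)
      = (1 + a * d i) * (1 + b * d j)
        * ∏ l ∈ (Finset.univ.erase i).erase j, (1 + w l * d l) := by
  rw [prod_split3 (fun l => 1 + (Function.update (Function.update w i a) j b) l * d l) hij]
  simp only [upd2_same_i w hij, upd2_same_j w i j]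
  have : ∏ l ∈ (Finset.univ.erase i).erase j,
      (1 + (Function.update (Function.update w i a) j b) l * d l)
      = ∏ l ∈ (Finset.univ.erase i).erase j, (1 + w l * d l) := by
    refine Finset.prod_congr rfl fun l hl => ?_
    have hlj : l ≠ j := (Finset.mem_erase.mp hl).1
    have hli : l ≠ i := (Finset.mem_erase.mp (Finset.mem_erase.mp hl).2).1
    rw [upd2_other w hli hlj a b]
  rw [this]; ring

private lemma pipage {m n : ℕ} (c : Fin m → Fin n → ℝ) (hc : ∀ r i, 0 ≤ c r i) :
    ∀ (k : ℕ) (w : Fin n → ℝ), (∀ i, w i ∈ Set.Icc (0:ℝ) 1) →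
      (∃ z : ℤ, ∑ i, w i = (z:ℝ)) →
      (Finset.univ.filter (fun i => w i ≠ 0 ∧ w i ≠ 1)).card ≤ k →
      ∃ y : Fin n → ℝ, (∀ i, y i = 0 ∨ y i = 1) ∧ (∑ i, y i = ∑ i, w i) ∧
        (∑ r, ∏ i, (1 + y i * c r i)) ≤ (∑ r, ∏ i, (1 + w i * c r i)) := by
  intro k
  induction k with
  | zero =>
    intro w hw _ hcard
    refine ⟨w, fun i => ?_, rfl, le_refl _⟩
    by_contra h
    push_neg at h
    have hmem : i ∈ Finset.univ.filter (fun i => w i ≠ 0 ∧ w i ≠ 1) :=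
      Finset.mem_filter.mpr ⟨Finset.mem_univ i, h⟩
    have := Finset.card_eq_zero.mp (Nat.le_zero.mp hcard)
    rw [this] at hmem
    exact absurd hmem (Finset.notMem_empty i)
  | succ k ih =>
    intro w hw hz hcard
    by_cases hex : ∃ i, w i ≠ 0 ∧ w i ≠ 1
    · obtain ⟨i, hi0, hi1⟩ := hex
      -- there is a second fractional coordinate
      have hexj : ∃ j, j ≠ i ∧ w j ≠ 0 ∧ w j ≠ 1 := by
        by_contra hj
        push_neg at hj
        obtain ⟨z, hzsum⟩ := hz
        have hsplit : w i + ∑ l ∈ Finset.univ.erase i, w l = ∑ l, w l :=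
          Finset.add_sum_erase _ _ (Finset.mem_univ i)
        have hint : ∑ l ∈ Finset.univ.erase i, w l
            = ((∑ l ∈ Finset.univ.erase i, (if w l = 1 then (1:ℤ) else 0)) : ℝ) := by
          push_cast
          refine Finset.sum_congr rfl fun l hl => ?_
          by_cases h0 : w l = 0
          · have hne : w l ≠ 1 := by rw [h0]; norm_num
            simp [h0, hne]
          · have h1 : w l = 1 := hj l (Finset.mem_erase.mp hl).1 h0
            simp [h1]
        set zz := ∑ l ∈ Finset.univ.erase i, (if w l = 1 then (1:ℤ) else 0) with hzz
        have hwi : w i = ((z - zz : ℤ) : ℝ) := by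
          rw [hzsum, hint] at hsplit
          have hzzr : ((zz : ℤ) : ℝ)
              = ∑ l ∈ Finset.univ.erase i, (if w l = 1 then ((1:ℤ):ℝ) else 0) := by
            rw [hzz]; push_cast; rfl
          push_cast at hsplit hzzr ⊢
          linarith
        have h0 := (hw i).1
        have h1 := (hw i).2
        rw [hwi] at h0 h1
        have hb0 : (0:ℤ) ≤ z - zz := by exact_mod_cast h0
        have hb1 : (z - zz : ℤ) ≤ 1 := by exact_mod_cast h1
        have : z - zz = 0 ∨ z - zz = 1 := by omega
        rcases this with h | h
        · rw [h] at hwi; exact hi0 (by simpa using hwi)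
        · rw [h] at hwi; exact hi1 (by simpa using hwi)
      obtain ⟨j, hji, hj0, hj1⟩ := hexj
      have hij : i ≠ j := fun h => hji (h.symm)
      have hi0' : 0 < w i := lt_of_le_of_ne (hw i).1 (Ne.symm hi0)
      have hi1' : w i < 1 := lt_of_le_of_ne (hw i).2 hi1
      have hj0' : 0 < w j := lt_of_le_of_ne (hw j).1 (Ne.symm hj0)
      have hj1' : w j < 1 := lt_of_le_of_ne (hw j).2 hj1
      set t1 := min (1 - w i) (w j) with ht1def
      set t2 := min (w i) (1 - w j) with ht2def
      have ht1 : 0 < t1 := lt_min (by linarith) (by linarith)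
      have ht2 : 0 < t2 := lt_min (by linarith) (by linarith)
      have ht1a : t1 ≤ 1 - w i := min_le_left _ _
      have ht1b : t1 ≤ w j := min_le_right _ _
      have ht2a : t2 ≤ w i := min_le_left _ _
      have ht2b : t2 ≤ 1 - w j := min_le_right _ _
      set y1 := Function.update (Function.update w i (w i + t1)) j (w j - t1) with hy1def
      set y2 := Function.update (Function.update w i (w i - t2)) j (w j + t2) with hy2def
      have hy1i : y1 i = w i + t1 := upd2_same_i w hij _ _
      have hy1j : y1 j = w j - t1 := upd2_same_j w i j _ _
      have hy2i : y2 i = w i - t2 := upd2_same_i w hij _ _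
      have hy2j : y2 j = w j + t2 := upd2_same_j w i j _ _
      have hy1o : ∀ l, l ≠ i → l ≠ j → y1 l = w l := fun l hli hlj => upd2_other w hli hlj _ _
      have hy2o : ∀ l, l ≠ i → l ≠ j → y2 l = w l := fun l hli hlj => upd2_other w hli hlj _ _
      -- membership in [0,1]
      have hy1mem : ∀ l, y1 l ∈ Set.Icc (0:ℝ) 1 := by
        intro l
        by_cases hli : l = i
        · subst hli; rw [hy1i]; constructor <;> [linarith; linarith]
        · by_cases hlj : l = j
          · subst hlj; rw [hy1j]; constructor <;> [linarith; linarith [(hw l).2]]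
          · rw [hy1o l hli hlj]; exact hw l
      have hy2mem : ∀ l, y2 l ∈ Set.Icc (0:ℝ) 1 := by
        intro l
        by_cases hli : l = i
        · subst hli; rw [hy2i]; constructor <;> [linarith; linarith [(hw l).2]]
        · by_cases hlj : l = j
          · subst hlj; rw [hy2j]; constructor <;> [linarith; linarith]
          · rw [hy2o l hli hlj]; exact hw l
      -- sums preserved
      have hy1sum : ∑ l, y1 l = ∑ l, w l := by
        rw [hy1def, sum_upd2 w hij]; ring
      have hy2sum : ∑ l, y2 l = ∑ l, w l := by
        rw [hy2def, sum_upd2 w hij]; ring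
      -- fractional support shrinks
      have hfilter : ∀ (y : Fin n → ℝ) (k0 : Fin n), (k0 = i ∨ k0 = j) →
          (y k0 = 0 ∨ y k0 = 1) →
          (∀ l, l ≠ i → l ≠ j → y l = w l) →
          (Finset.univ.filter (fun l => y l ≠ 0 ∧ y l ≠ 1)).card ≤ k := by
        intro y k0 hk0ij hk0 hyo
        have hk0mem : k0 ∈ Finset.univ.filter (fun l => w l ≠ 0 ∧ w l ≠ 1) := by
          rcases hk0ij with h | h <;> subst h <;>
            exact Finset.mem_filter.mpr ⟨Finset.mem_univ _, by tauto⟩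
        have hsub : Finset.univ.filter (fun l => y l ≠ 0 ∧ y l ≠ 1) ⊆
            (Finset.univ.filter (fun l => w l ≠ 0 ∧ w l ≠ 1)).erase k0 := by
          intro l hl
          have hl' := (Finset.mem_filter.mp hl).2
          have hlk0 : l ≠ k0 := by
            intro h; subst h
            rcases hk0 with h | h
            · exact hl'.1 h
            · exact hl'.2 h
          refine Finset.mem_erase.mpr ⟨hlk0, Finset.mem_filter.mpr ⟨Finset.mem_univ _, ?_⟩⟩
          by_cases hli : l = i
          · subst hli; exact ⟨hi0, hi1⟩
          · by_cases hlj : l = j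
            · subst hlj; exact ⟨hj0, hj1⟩
            · rw [← hyo l hli hlj]; exact hl'
        have h1 := Finset.card_le_card hsub
        have h2 := Finset.card_erase_of_mem hk0mem
        omega
      have hy1card : (Finset.univ.filter (fun l => y1 l ≠ 0 ∧ y1 l ≠ 1)).card ≤ k := by
        rcases le_total (1 - w i) (w j) with h | h
        · exact hfilter y1 i (Or.inl rfl) (Or.inr (by rw [hy1i, ht1def, min_eq_left h]; ring)) hy1o
        · exact hfilter y1 j (Or.inr rfl) (Or.inl (by rw [hy1j, ht1def, min_eq_right h]; ring)) hy1o
      have hy2card : (Finset.univ.filter (fun l => y2 l ≠ 0 ∧ y2 l ≠ 1)).card ≤ k := by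
        rcases le_total (w i) (1 - w j) with h | h
        · exact hfilter y2 i (Or.inl rfl) (Or.inl (by rw [hy2i, ht2def, min_eq_left h]; ring)) hy2o
        · exact hfilter y2 j (Or.inr rfl) (Or.inr (by rw [hy2j, ht2def, min_eq_right h]; ring)) hy2o
      -- concavity: one of the two moves does not increase the potential
      have hcomb : (∑ r, ∏ l, (1 + y1 l * c r l)) * t2 + (∑ r, ∏ l, (1 + y2 l * c r l)) * t1
          ≤ (t2 + t1) * ∑ r, ∏ l, (1 + w l * c r l) := by
        rw [Finset.sum_mul, Finset.sum_mul, Finset.mul_sum, ← Finset.sum_add_distrib]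
        refine Finset.sum_le_sum fun r _ => ?_
        have hP : (0:ℝ) ≤ ∏ l ∈ (Finset.univ.erase i).erase j, (1 + w l * c r l) :=
          Finset.prod_nonneg fun l _ => by
            have := (hw l).1; have := hc r l; nlinarith
        rw [hy1def, hy2def, prod_upd2 w (c r) hij, prod_upd2 w (c r) hij,
          prod_split3 (fun l => 1 + w l * c r l) hij]
        set P := ∏ l ∈ (Finset.univ.erase i).erase j, (1 + w l * c r l)
        have hci := hc r i
        have hcj := hc r j
        have hkey : (0:ℝ) ≤ P * (c r i * c r j) * (t1 * t2 * (t1 + t2)) := by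
          apply mul_nonneg (mul_nonneg hP (mul_nonneg hci hcj))
          positivity
        nlinarith [hkey]
      rcases le_or_gt (∑ r, ∏ l, (1 + y1 l * c r l)) (∑ r, ∏ l, (1 + w l * c r l)) with hch | hch
      · obtain ⟨y, hy01, hysum, hyle⟩ := ih y1 hy1mem (by
          obtain ⟨z, hzs⟩ := hz; exact ⟨z, by rw [hy1sum, hzs]⟩) hy1card
        exact ⟨y, hy01, by rw [hysum, hy1sum], le_trans hyle hch⟩
      · have hch2 : (∑ r, ∏ l, (1 + y2 l * c r l)) ≤ (∑ r, ∏ l, (1 + w l * c r l)) := by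
          nlinarith [hcomb, ht1, ht2]
        obtain ⟨y, hy01, hysum, hyle⟩ := ih y2 hy2mem (by
          obtain ⟨z, hzs⟩ := hz; exact ⟨z, by rw [hy2sum, hzs]⟩) hy2card
        exact ⟨y, hy01, by rw [hysum, hy2sum], le_trans hyle hch2⟩
    · push_neg at hex
      refine ⟨w, fun i => ?_, rfl, le_refl _⟩
      by_contra h
      push_neg at h
      exact h.2 (hex i h.1)

/-- **Dependent randomized rounding with cardinality constraint (existence content).**
Let `A` be an `m × n` matrix with entries in `[0,1]` and `x ∈ [0,1]^n` with integral
coordinate sum. If `(Ax)_r ≤ 1` for every row `r`, then there is a `0/1` vector `y`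
with the same coordinate sum as `x` such that every row satisfies
`(Ay)_r ≤ 1 + e·ln(2m)/ln(e·ln(2m))`. -/
theorem dependent_rounding_exists
    (m n : ℕ) (hm : 1 ≤ m) (hn : 1 ≤ n)
    (A : Matrix (Fin m) (Fin n) ℝ)
    (hA : ∀ r i, A r i ∈ Set.Icc (0 : ℝ) 1)
    (x : Fin n → ℝ)
    (hx : ∀ i, x i ∈ Set.Icc (0 : ℝ) 1)
    (hxint : ∃ z : ℤ, ∑ i, x i = (z : ℝ))
    (hAx : ∀ r, A.mulVec x r ≤ 1) :
    ∃ y : Fin n → ℝ,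
      (∀ i, y i = 0 ∨ y i = 1) ∧
      (∑ i, y i = ∑ i, x i) ∧
      (∀ r, A.mulVec y r ≤
        1 + Real.exp 1 * Real.log (2 * m) / Real.log (Real.exp 1 * Real.log (2 * m))) := by
  obtain ⟨hlamge, hkey⟩ := key_lemma m hm
  set u := Real.log (2 * (m:ℝ)) with hudef
  set lam := Real.exp 1 * u / Real.log (Real.exp 1 * u) with hlamdef
  have hEg : (2.7182818283 : ℝ) < Real.exp 1 := Real.exp_one_gt_d9
  have hlam1 : (1:ℝ) < lam := by linarith
  have hlampos : (0:ℝ) < lam := by linarith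
  have hloglam : (0:ℝ) < Real.log lam := Real.log_pos hlam1
  set c : Fin m → Fin n → ℝ := fun r i => Real.exp (A r i * Real.log lam) - 1 with hcdef
  have hc : ∀ r i, 0 ≤ c r i := by
    intro r i
    have h1 : (0:ℝ) ≤ A r i * Real.log lam := mul_nonneg (hA r i).1 hloglam.le
    have := Real.one_le_exp h1
    simp only [hcdef]; linarith
  have hcard : (Finset.univ.filter (fun i => x i ≠ 0 ∧ x i ≠ 1)).card ≤ n := by
    simpa using Finset.card_filter_le Finset.univ (fun i => x i ≠ 0 ∧ x i ≠ 1)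
  obtain ⟨y, hy01, hysum, hyΦ⟩ := pipage c hc n x hx hxint hcard
  refine ⟨y, hy01, hysum, fun r => ?_⟩
  have hmR : (0:ℝ) < (m:ℝ) := by exact_mod_cast Nat.lt_of_lt_of_le Nat.zero_lt_one hm
  -- upper bound on the potential of x
  have hΦx : (∑ r', ∏ i, (1 + x i * c r' i)) ≤ (m:ℝ) * Real.exp (lam - 1) := by
    have hrowbd : ∀ r' : Fin m, (∏ i, (1 + x i * c r' i)) ≤ Real.exp (lam - 1) := by
      intro r'
      have hBern : ∀ i, c r' i ≤ A r' i * (lam - 1) := by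
        intro i
        have hA01 := hA r' i
        have hconv := convexOn_exp.2 (Set.mem_univ (Real.log lam)) (Set.mem_univ (0:ℝ))
          hA01.1 (show (0:ℝ) ≤ 1 - A r' i by linarith [hA01.2])
          (show A r' i + (1 - A r' i) = 1 by ring)
        simp only [smul_eq_mul, mul_zero, add_zero, Real.exp_zero] at hconv
        rw [Real.exp_log hlampos] at hconv
        simp only [hcdef]
        nlinarith [hconv]
      have hsum : (∑ i, x i * c r' i) ≤ lam - 1 := by
        have h1 : (∑ i, x i * c r' i) ≤ ∑ i, A r' i * x i * (lam - 1) := by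
          refine Finset.sum_le_sum fun i _ => ?_
          have h2 := hBern i
          have h3 := (hx i).1
          nlinarith
        have h4 : ∑ i, A r' i * x i * (lam - 1) = (∑ i, A r' i * x i) * (lam - 1) := by
          rw [← Finset.sum_mul]
        have h5 : A.mulVec x r' = ∑ i, A r' i * x i := by
          simp [Matrix.mulVec, dotProduct]
        have h6 := hAx r'
        rw [h5] at h6
        nlinarith [h6, hlam1]
      calc (∏ i, (1 + x i * c r' i)) ≤ ∏ i, Real.exp (x i * c r' i) := by
            refine Finset.prod_le_prod (fun i _ => ?_) (fun i _ => ?_)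
            · have := (hx i).1; have := hc r' i; nlinarith
            · have := Real.add_one_le_exp (x i * c r' i); linarith
        _ = Real.exp (∑ i, x i * c r' i) := (Real.exp_sum _ _).symm
        _ ≤ Real.exp (lam - 1) := Real.exp_le_exp.mpr hsum
    calc (∑ r', ∏ i, (1 + x i * c r' i)) ≤ ∑ _r' : Fin m, Real.exp (lam - 1) :=
          Finset.sum_le_sum fun r' _ => hrowbd r'
      _ = (m:ℝ) * Real.exp (lam - 1) := by
          rw [Finset.sum_const, Finset.card_univ, Fintype.card_fin, nsmul_eq_mul]
  -- the row value of y as a product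
  have hrow : Real.exp ((A.mulVec y r) * Real.log lam) = ∏ i, (1 + y i * c r i) := by
    have h5 : A.mulVec y r = ∑ i, A r i * y i := by
      simp [Matrix.mulVec, dotProduct]
    rw [h5, Finset.sum_mul, Real.exp_sum]
    refine Finset.prod_congr rfl fun i _ => ?_
    rcases hy01 i with h | h
    · simp [h]
    · simp only [h, mul_one, one_mul, hcdef]
      ring
  have hΦylb : Real.exp ((A.mulVec y r) * Real.log lam) ≤ ∑ r', ∏ i, (1 + y i * c r' i) := by
    rw [hrow]
    refine Finset.single_le_sum (f := fun r' => ∏ i, (1 + y i * c r' i))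
      (fun r' _ => Finset.prod_nonneg fun i _ => ?_) (Finset.mem_univ r)
    rcases hy01 i with h | h
    · simp [h]
    · have := hc r' i; nlinarith
  have hchain : Real.exp ((A.mulVec y r) * Real.log lam) ≤ Real.exp (Real.log m + (lam - 1)) := by
    rw [Real.exp_add, Real.exp_log hmR]
    exact le_trans hΦylb (le_trans hyΦ hΦx)
  have h2 : (A.mulVec y r) * Real.log lam ≤ Real.log m + (lam - 1) := Real.exp_le_exp.mp hchain
  have h3 : (A.mulVec y r) * Real.log lam ≤ (1 + lam) * Real.log lam := le_trans h2 hkey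
  have h4 : A.mulVec y r ≤ 1 + lam :=
    le_of_mul_le_mul_right (by linarith [h3]) hloglam
  exact h4
end

section
/- There is a constant c > 0 with the following property. For all integers m ≥ 3 and n ≥ 1, every m×n matrix A with all entries in [0,1] ∩ ℚ, and every vector x ∈ ([0,1] ∩ ℚ)^n such that ∑_{i=1}^n x_i is an integer, there exists y ∈ {0,1}^n such that ∑_{i=1}^n y_i = ∑_{i=1}^n x_i and, for every row r ∈ {1, …, m}, (Ay)_r ≤ c · max{1, (Ax)_r} · ln(m)/ln(ln(m)). -/
lemma pipage_concave (A B R xi xk δp δm p : ℝ) (hA : 0 ≤ A) (hB : 0 ≤ B) (hR : 0 ≤ R)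
    (hp0 : 0 ≤ p) (hp1 : p ≤ 1) (hfact : p * δp = (1 - p) * δm) :
    p * ((1 + A * (xi + δp)) * ((1 + B * (xk - δp)) * R)) +
      (1 - p) * ((1 + A * (xi - δm)) * ((1 + B * (xk + δm)) * R)) ≤
    (1 + A * xi) * ((1 + B * xk) * R) := by
  have key : p * ((1 + A * (xi + δp)) * ((1 + B * (xk - δp)) * R)) +
      (1 - p) * ((1 + A * (xi - δm)) * ((1 + B * (xk + δm)) * R)) =
      (1 + A * xi) * ((1 + B * xk) * R) - R * A * B * (p * δp ^ 2 + (1 - p) * δm ^ 2) := by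
    linear_combination (R * (A - B + A * B * (xk - xi))) * hfact
  rw [key]
  have h1 : 0 ≤ R * A * B * (p * δp ^ 2 + (1 - p) * δm ^ 2) := by exact mul_nonneg (mul_nonneg (mul_nonneg hR hA) hB) (add_nonneg (mul_nonneg hp0 (sq_nonneg _)) (mul_nonneg (by linarith) (sq_nonneg _)))
  linarith


/-- One pipage move: shift `δ` of mass from coordinate `k` to coordinate `i`. -/
lemma pipage_step {n : ℕ} (x x' : Fin n → ℝ) (i k : Fin n) (hik : i ≠ k)
    (hx : ∀ j, 0 ≤ x j ∧ x j ≤ 1)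
    (hi : x i ≠ 0 ∧ x i ≠ 1) (hk : x k ≠ 0 ∧ x k ≠ 1)
    (δ : ℝ) (hδ1 : δ ≤ 1 - x i) (hδ2 : δ ≤ x k) (hδeq : δ = 1 - x i ∨ δ = x k)
    (hx' : ∀ j, x' j = if j = i then x i + δ else if j = k then x k - δ else x j) :
    (∀ j, 0 ≤ x' j ∧ x' j ≤ 1) ∧
    (∑ j, x' j = ∑ j, x j) ∧
    ((Finset.univ.filter (fun j => x' j ≠ 0 ∧ x' j ≠ 1)).card
      < (Finset.univ.filter (fun j => x j ≠ 0 ∧ x j ≠ 1)).card) := by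
  have hδ0 : 0 ≤ δ := by
    rcases hδeq with h | h
    · have h2 := (hx i).2
      rcases lt_or_eq_of_le h2 with h' | h'
      · linarith
      · exact absurd h' hi.2
    · have h2 := (hx k).1
      rcases lt_or_eq_of_le h2 with h' | h'
      · linarith
      · exact absurd h'.symm hk.1
  have hvi : x' i = x i + δ := by rw [hx' i, if_pos rfl]
  have hvk : x' k = x k - δ := by rw [hx' k, if_neg (Ne.symm hik), if_pos rfl]
  have hvo : ∀ j, j ≠ i → j ≠ k → x' j = x j := by
    intro j h1 h2; rw [hx' j, if_neg h1, if_neg h2]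
  refine ⟨?_, ?_, ?_⟩
  · intro j
    by_cases hji : j = i
    · subst hji
      rw [hvi]
      exact ⟨by linarith [(hx j).1], by linarith⟩
    · by_cases hjk : j = k
      · subst hjk
        rw [hvk]
        exact ⟨by linarith, by linarith [(hx j).2]⟩
      · rw [hvo j hji hjk]; exact hx j
  · have key : ∀ j, x' j = x j + ((if j = i then δ else 0) - (if j = k then δ else 0)) := by
      intro j
      by_cases hji : j = i
      · subst hji; rw [hvi, if_pos rfl, if_neg hik]; ring
      · by_cases hjk : j = k
        · subst hjk; rw [hvk, if_neg hji, if_pos rfl]; ring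
        · rw [hvo j hji hjk, if_neg hji, if_neg hjk]; ring
    rw [Finset.sum_congr rfl (fun j _ => key j), Finset.sum_add_distrib,
      Finset.sum_sub_distrib]
    simp [Finset.sum_ite_eq' Finset.univ]
  · have hsub : ∀ w : Fin n, (x' w = 0 ∨ x' w = 1) →
        (Finset.univ.filter (fun j => x' j ≠ 0 ∧ x' j ≠ 1)) ⊆
          (Finset.univ.filter (fun j => x j ≠ 0 ∧ x j ≠ 1)).erase w := by
      intro w hw j hj
      rw [Finset.mem_filter] at hj
      rw [Finset.mem_erase, Finset.mem_filter]
      have hjw : j ≠ w := by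
        rintro rfl
        rcases hw with h | h
        · exact hj.2.1 h
        · exact hj.2.2 h
      refine ⟨hjw, Finset.mem_univ j, ?_⟩
      by_cases hji : j = i
      · subst hji; exact hi
      · by_cases hjk : j = k
        · subst hjk; exact hk
        · rw [hvo j hji hjk] at hj; exact hj.2
    have hmem : i ∈ (Finset.univ.filter (fun j => x j ≠ 0 ∧ x j ≠ 1)) := by
      rw [Finset.mem_filter]; exact ⟨Finset.mem_univ i, hi⟩
    have hkmem : k ∈ (Finset.univ.filter (fun j => x j ≠ 0 ∧ x j ≠ 1)) := by
      rw [Finset.mem_filter]; exact ⟨Finset.mem_univ k, hk⟩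
    rcases hδeq with h | h
    · have h1 : x' i = 1 := by rw [hvi, h]; ring
      calc (Finset.univ.filter (fun j => x' j ≠ 0 ∧ x' j ≠ 1)).card
          ≤ ((Finset.univ.filter (fun j => x j ≠ 0 ∧ x j ≠ 1)).erase i).card :=
            Finset.card_le_card (hsub i (Or.inr h1))
        _ < _ := Finset.card_erase_lt_of_mem hmem
    · have h1 : x' k = 0 := by rw [hvk, h]; ring
      calc (Finset.univ.filter (fun j => x' j ≠ 0 ∧ x' j ≠ 1)).card
          ≤ ((Finset.univ.filter (fun j => x j ≠ 0 ∧ x j ≠ 1)).erase k).card :=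
            Finset.card_le_card (hsub k (Or.inl h1))
        _ < _ := Finset.card_erase_lt_of_mem hkmem

/-- Pipage rounding: a finitely supported distribution on 0/1 vectors with the same sum,
whose "moment products" are dominated by those of `x`. -/
lemma pipage_s1 {n : ℕ} : ∀ (d : ℕ) (x : Fin n → ℝ),
    (Finset.univ.filter (fun j => x j ≠ 0 ∧ x j ≠ 1)).card ≤ d →
    (∀ j, 0 ≤ x j ∧ x j ≤ 1) → (∃ z : ℤ, ∑ j, x j = (z : ℝ)) →
    ∃ D : Multiset (ℝ × (Fin n → ℝ)),
      (∀ q ∈ D, 0 ≤ q.1) ∧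
      (D.map Prod.fst).sum = 1 ∧
      (∀ q ∈ D, (∀ j, q.2 j = 0 ∨ q.2 j = 1) ∧ ∑ j, q.2 j = ∑ j, x j) ∧
      (∀ lam : Fin n → ℝ, (∀ j, 0 ≤ lam j) →
        (D.map (fun q => q.1 * ∏ j, (1 + lam j * q.2 j))).sum ≤ ∏ j, (1 + lam j * x j)) := by
  intro d
  induction d with
  | zero =>
    intro x hcard hx _
    refine ⟨{(1, x)}, ?_, ?_, ?_, ?_⟩
    · rintro q hq
      rw [Multiset.mem_singleton] at hq
      subst hq; norm_num
    · simp
    · rintro q hq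
      rw [Multiset.mem_singleton] at hq
      subst hq
      refine ⟨fun j => ?_, rfl⟩
      have : j ∉ Finset.univ.filter (fun j => x j ≠ 0 ∧ x j ≠ 1) := by
        intro hmem
        have := Finset.card_pos.mpr ⟨j, hmem⟩
        omega
      rw [Finset.mem_filter] at this
      push_neg at this
      by_cases h0 : x j = 0
      · exact Or.inl h0
      · exact Or.inr (this (Finset.mem_univ j) h0)
    · intro lam _
      simp
  | succ d ih =>
    intro x hcard hx hz
    by_cases hc : (Finset.univ.filter (fun j => x j ≠ 0 ∧ x j ≠ 1)).card = 0
    · exact ih x (by omega) hx hz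
    · -- there is a fractional coordinate i
      have hpos : 0 < (Finset.univ.filter (fun j => x j ≠ 0 ∧ x j ≠ 1)).card := by omega
      obtain ⟨i, hi⟩ := Finset.card_pos.mp hpos
      rw [Finset.mem_filter] at hi
      have hi := hi.2
      -- there is a second fractional coordinate k
      have hex : ∃ k, k ≠ i ∧ x k ≠ 0 ∧ x k ≠ 1 := by
        by_contra hno
        push_neg at hno
        obtain ⟨z, hzz⟩ := hz
        have hsum2 : ∑ j ∈ Finset.univ.erase i, x j =
            ((∑ j ∈ Finset.univ.erase i, if x j = 1 then (1:ℤ) else 0 : ℤ) : ℝ) := by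
          rw [Int.cast_sum]
          refine Finset.sum_congr rfl (fun j hj => ?_)
          by_cases h1 : x j = 1
          · rw [if_pos h1, h1]; norm_num
          · have h0 : x j = 0 := by
              by_contra h0
              exact h1 (hno j (Finset.mem_erase.mp hj).1 h0)
            rw [if_neg h1, h0]; norm_num
        have hxi : x i = ((z - ∑ j ∈ Finset.univ.erase i, if x j = 1 then (1:ℤ) else 0 : ℤ) : ℝ) := by
          have htot := Finset.add_sum_erase Finset.univ x (Finset.mem_univ i)
          rw [hsum2, hzz] at htot
          rw [Int.cast_sub]
          linarith
        have h0 : (0:ℝ) < x i := lt_of_le_of_ne (hx i).1 (Ne.symm hi.1)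
        have h1 : x i < 1 := lt_of_le_of_ne (hx i).2 hi.2
        rw [hxi] at h0 h1
        have h0' : (0:ℤ) < z - ∑ j ∈ Finset.univ.erase i, if x j = 1 then (1:ℤ) else 0 := by
          exact_mod_cast h0
        have h1' : (z - ∑ j ∈ Finset.univ.erase i, if x j = 1 then (1:ℤ) else 0) < 1 := by
          exact_mod_cast h1
        omega
      obtain ⟨k, hki, hk⟩ := hex
      have hik : i ≠ k := Ne.symm hki
      -- strict bounds
      have hxi0 : 0 < x i := lt_of_le_of_ne (hx i).1 (Ne.symm hi.1)
      have hxi1 : x i < 1 := lt_of_le_of_ne (hx i).2 hi.2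
      have hxk0 : 0 < x k := lt_of_le_of_ne (hx k).1 (Ne.symm hk.1)
      have hxk1 : x k < 1 := lt_of_le_of_ne (hx k).2 hk.2
      set δp := min (1 - x i) (x k) with hδp
      set δm := min (x i) (1 - x k) with hδm
      have hδp0 : 0 < δp := lt_min (by linarith) hxk0
      have hδm0 : 0 < δm := lt_min hxi0 (by linarith)
      set p := δm / (δp + δm) with hpd
      have hden : 0 < δp + δm := by linarith
      have hp0 : 0 ≤ p := le_of_lt (div_pos hδm0 hden)
      have hp1 : p ≤ 1 := by
        rw [hpd, div_le_one hden]; linarith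
      have hfact : p * δp = (1 - p) * δm := by
        field_simp [hpd]
        have hpm : p * (δp + δm) = δm := by rw [hpd]; exact div_mul_cancel₀ _ hden.ne'
        linear_combination hpm
      -- two successor vectors
      set xp : Fin n → ℝ := fun j => if j = i then x i + δp else if j = k then x k - δp else x j with hxpd
      set xm : Fin n → ℝ := fun j => if j = k then x k + δm else if j = i then x i - δm else x j with hxmd
      have hstepp := pipage_step x xp i k hik hx hi hk δp (min_le_left _ _) (min_le_right _ _)
        (min_choice _ _) (fun j => rfl)
      have hstepm := pipage_step x xm k i hki hx hk hi δm (min_le_right _ _) (min_le_left _ _)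
        ((min_choice _ _).symm) (fun j => rfl)
      obtain ⟨hxpb, hxps, hxpc⟩ := hstepp
      obtain ⟨hxmb, hxms, hxmc⟩ := hstepm
      obtain ⟨Dp, hDp0, hDp1, hDp2, hDp3⟩ := ih xp (by omega) hxpb (by rw [hxps]; exact hz)
      obtain ⟨Dm, hDm0, hDm1, hDm2, hDm3⟩ := ih xm (by omega) hxmb (by rw [hxms]; exact hz)
      refine ⟨Dp.map (fun q => (p * q.1, q.2)) + Dm.map (fun q => ((1 - p) * q.1, q.2)),
        ?_, ?_, ?_, ?_⟩
      · intro q hq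
        rw [Multiset.mem_add] at hq
        rcases hq with hq | hq <;> obtain ⟨q', hq', rfl⟩ := Multiset.mem_map.mp hq
        · exact mul_nonneg hp0 (hDp0 q' hq')
        · exact mul_nonneg (by linarith) (hDm0 q' hq')
      · rw [Multiset.map_add, Multiset.sum_add, Multiset.map_map, Multiset.map_map]
        simp only [Function.comp]
        rw [Multiset.sum_map_mul_left, Multiset.sum_map_mul_left, hDp1, hDm1]
        ring
      · intro q hq
        rw [Multiset.mem_add] at hq
        rcases hq with hq | hq <;> obtain ⟨q', hq', rfl⟩ := Multiset.mem_map.mp hq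
        · exact ⟨(hDp2 q' hq').1, by rw [(hDp2 q' hq').2, hxps]⟩
        · exact ⟨(hDm2 q' hq').1, by rw [(hDm2 q' hq').2, hxms]⟩
      · intro lam hlam
        rw [Multiset.map_add, Multiset.sum_add, Multiset.map_map, Multiset.map_map]
        simp only [Function.comp]
        have e1 : (Dp.map (fun q => p * q.1 * ∏ j, (1 + lam j * q.2 j))).sum
            = p * (Dp.map (fun q => q.1 * ∏ j, (1 + lam j * q.2 j))).sum := by
          rw [← Multiset.sum_map_mul_left]
          congr 1
          apply Multiset.map_congr rfl
          intro q _; ring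
        have e2 : (Dm.map (fun q => (1 - p) * q.1 * ∏ j, (1 + lam j * q.2 j))).sum
            = (1 - p) * (Dm.map (fun q => q.1 * ∏ j, (1 + lam j * q.2 j))).sum := by
          rw [← Multiset.sum_map_mul_left]
          congr 1
          apply Multiset.map_congr rfl
          intro q _; ring
        rw [e1, e2]
        have hp' := hDp3 lam hlam
        have hm' := hDm3 lam hlam
        have h1 : p * (Dp.map (fun q => q.1 * ∏ j, (1 + lam j * q.2 j))).sum
            ≤ p * ∏ j, (1 + lam j * xp j) := by
          exact mul_le_mul_of_nonneg_left hp' hp0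
        have h2 : (1 - p) * (Dm.map (fun q => q.1 * ∏ j, (1 + lam j * q.2 j))).sum
            ≤ (1 - p) * ∏ j, (1 + lam j * xm j) := by
          exact mul_le_mul_of_nonneg_left hm' (by linarith)
        -- now the concavity step
        have hfac : ∀ (v : Fin n → ℝ),
            ∏ j, (1 + lam j * v j) =
            (1 + lam i * v i) * ((1 + lam k * v k) * ∏ j ∈ (Finset.univ.erase i).erase k, (1 + lam j * v j)) := by
          intro v
          rw [← Finset.mul_prod_erase Finset.univ _ (Finset.mem_univ i)]
          congr 1
          rw [← Finset.mul_prod_erase (Finset.univ.erase i) _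
            (Finset.mem_erase.mpr ⟨hki, Finset.mem_univ k⟩)]
        have hRsame : ∀ (v : Fin n → ℝ), (∀ j, j ≠ i → j ≠ k → v j = x j) →
            ∏ j ∈ (Finset.univ.erase i).erase k, (1 + lam j * v j)
            = ∏ j ∈ (Finset.univ.erase i).erase k, (1 + lam j * x j) := by
          intro v hv
          refine Finset.prod_congr rfl (fun j hj => ?_)
          rw [Finset.mem_erase, Finset.mem_erase] at hj
          rw [hv j hj.2.1 hj.1]
        set R := ∏ j ∈ (Finset.univ.erase i).erase k, (1 + lam j * x j) with hR
        have hR0 : 0 ≤ R := by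
          apply Finset.prod_nonneg
          intro j hj
          have := mul_nonneg (hlam j) (hx j).1
          linarith
        have hxpe : ∏ j, (1 + lam j * xp j) = (1 + lam i * (x i + δp)) * ((1 + lam k * (x k - δp)) * R) := by
          rw [hfac xp, hRsame xp (fun j h1 h2 => by simp only [hxpd]; rw [if_neg h1, if_neg h2])]
          have hpi : xp i = x i + δp := by simp [hxpd]
          have hpk : xp k = x k - δp := by simp [hxpd, hki]
          rw [hpi, hpk]
        have hxme : ∏ j, (1 + lam j * xm j) = (1 + lam i * (x i - δm)) * ((1 + lam k * (x k + δm)) * R) := by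
          rw [hfac xm, hRsame xm (fun j h1 h2 => by simp only [hxmd]; rw [if_neg h2, if_neg h1])]
          have hmi : xm i = x i - δm := by simp [hxmd, hik]
          have hmk : xm k = x k + δm := by simp [hxmd]
          rw [hmi, hmk]
        have hxe : ∏ j, (1 + lam j * x j) = (1 + lam i * x i) * ((1 + lam k * x k) * R) := by
          rw [hfac x]
        rw [hxe]
        calc p * (Dp.map (fun q => q.1 * ∏ j, (1 + lam j * q.2 j))).sum +
              (1 - p) * (Dm.map (fun q => q.1 * ∏ j, (1 + lam j * q.2 j))).sum
            ≤ p * ∏ j, (1 + lam j * xp j) + (1 - p) * ∏ j, (1 + lam j * xm j) := by linarith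
          _ = p * ((1 + lam i * (x i + δp)) * ((1 + lam k * (x k - δp)) * R)) +
              (1 - p) * ((1 + lam i * (x i - δm)) * ((1 + lam k * (x k + δm)) * R)) := by
              rw [hxpe, hxme]
          _ ≤ (1 + lam i * x i) * ((1 + lam k * x k) * R) :=
              pipage_concave _ _ _ _ _ _ _ _ (hlam i) (hlam k) hR0 hp0 hp1 hfact


lemma multiset_sum_swap {α β : Type*} [Fintype β] (D : Multiset α) (h : β → α → ℝ) :
    (D.map (fun q => ∑ r, h r q)).sum = ∑ r, (D.map (h r)).sum := by
  induction D using Multiset.induction_on with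
  | empty => simp
  | cons a t ih => simp [ih, Finset.sum_add_distrib]

lemma exp_convex_aux (s a : ℝ) (ha0 : 0 ≤ a) (ha1 : a ≤ 1) :
    Real.exp (s * a) ≤ 1 + a * (Real.exp s - 1) := by
  have := convexOn_exp.2 (Set.mem_univ (0:ℝ)) (Set.mem_univ s)
    (by linarith : (0:ℝ) ≤ 1 - a) ha0 (by ring)
  simp only [smul_eq_mul] at this
  calc Real.exp (s * a) = Real.exp ((1-a) * 0 + a * s) := by ring_nf
    _ ≤ (1-a) * Real.exp 0 + a * Real.exp s := this
    _ = 1 + a * (Real.exp s - 1) := by simp [Real.exp_zero]; ring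

lemma key_ineq (u : ℝ) (hu : 1 < u) :
    Real.exp (max 1 (Real.log u)) - 1 + u + 1/2 ≤
      3 * (max 1 (Real.log u)) * (u / Real.log u) := by
  set v := Real.log u with hv
  have hv0 : 0 < v := Real.log_pos hu
  have hu0 : (0:ℝ) < u := by linarith
  by_cases hv1 : 1 ≤ v
  · rw [max_eq_right hv1]
    have h1 : v * (u / v) = u := by field_simp
    have h2 : Real.exp v = u := Real.exp_log hu0
    have h3 : 3 * v * (u / v) = 3 * u := by rw [mul_assoc, h1]
    rw [h2, h3]
    linarith
  · push_neg at hv1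
    rw [max_eq_left (le_of_lt hv1)]
    have hLu : u ≤ u / v := by
      rw [le_div_iff₀ hv0]
      nlinarith
    have hev : v * Real.exp 1 ≤ u := by
      have hx : (0:ℝ) < u / Real.exp 1 := div_pos hu0 (Real.exp_pos 1)
      have := Real.log_le_sub_one_of_pos hx
      rw [Real.log_div (ne_of_gt hu0) (ne_of_gt (Real.exp_pos 1)), Real.log_exp] at this
      have he1 : (0:ℝ) < Real.exp 1 := Real.exp_pos 1
      have : v ≤ u / Real.exp 1 := by linarith
      calc v * Real.exp 1 ≤ (u / Real.exp 1) * Real.exp 1 :=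
            mul_le_mul_of_nonneg_right this he1.le
        _ = u := by field_simp
    have hLe : Real.exp 1 ≤ u / v := by
      rw [le_div_iff₀ hv0]
      linarith [mul_comm v (Real.exp 1)]
    have he : (1.5:ℝ) ≤ Real.exp 1 := by
      have := Real.exp_one_gt_d9
      norm_num at this ⊢
      linarith
    have hemax : Real.exp 1 < 2.7182818286 := Real.exp_one_lt_d9
    nlinarith

set_option maxHeartbeats 2000000 in
/-- **RAM-model rounding theorem (existence content, Theorem 2 of the paper).**
There is a constant `c > 0` such that for all `m ≥ 3`, `n ≥ 1`, every `m × n` matrix `A`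
with entries in `[0,1] ∩ ℚ` and every `x ∈ ([0,1] ∩ ℚ)^n` with integral coordinate sum,
there is a `0/1` vector `y` with the same coordinate sum such that every row satisfies
`(Ay)_r ≤ c · max{1, (Ax)_r} · ln(m)/ln(ln(m))`. -/
theorem ram_rounding_exists :
    ∃ c : ℝ, 0 < c ∧
      ∀ (m n : ℕ), 3 ≤ m → 1 ≤ n →
        ∀ (A : Matrix (Fin m) (Fin n) ℝ),
          (∀ r i, A r i ∈ Set.Icc (0 : ℝ) 1 ∧ ∃ q : ℚ, A r i = (q : ℝ)) →
          ∀ (x : Fin n → ℝ),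
            (∀ i, x i ∈ Set.Icc (0 : ℝ) 1 ∧ ∃ q : ℚ, x i = (q : ℝ)) →
            (∃ z : ℤ, ∑ i, x i = (z : ℝ)) →
            ∃ y : Fin n → ℝ,
              (∀ i, y i = 0 ∨ y i = 1) ∧
              (∑ i, y i = ∑ i, x i) ∧
              (∀ r, A.mulVec y r ≤
                c * max 1 (A.mulVec x r) * (Real.log m / Real.log (Real.log m))) := by
  refine ⟨3, by norm_num, ?_⟩
  intro m n hm hn A hA x hx hz
  -- basic quantities
  set u := Real.log (m : ℝ) with hu
  set v := Real.log u with hv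
  set s := max 1 v with hs
  set L := u / v with hL
  have hm0 : (0:ℝ) < m := by positivity
  have hm3 : (3:ℝ) ≤ (m:ℝ) := by exact_mod_cast hm
  have hu1 : 1 < u := by
    rw [hu, ← Real.log_exp 1]
    apply Real.log_lt_log (Real.exp_pos 1)
    calc Real.exp 1 < 2.7182818286 := Real.exp_one_lt_d9
      _ ≤ (m:ℝ) := by linarith
  have hv0 : 0 < v := Real.log_pos hu1
  have hs1 : 1 ≤ s := le_max_left _ _
  have hs0 : 0 < s := by linarith
  have hL0 : 0 < L := div_pos (by linarith) hv0
  have hkey : Real.exp s - 1 + u + 1/2 ≤ 3 * s * L := key_ineq u hu1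
  have hes1 : 1 ≤ Real.exp s := by
    rw [← Real.exp_zero]
    exact Real.exp_le_exp.mpr (by linarith)
  -- pipage distribution
  obtain ⟨D, hD0, hD1, hD2, hD3⟩ := pipage_s1
    (Finset.univ.filter (fun j => x j ≠ 0 ∧ x j ≠ 1)).card x le_rfl
    (fun j => ⟨(hx j).1.1, (hx j).1.2⟩) hz
  -- the row bounds
  set a : Fin m → ℝ := fun r => 3 * max 1 (A.mulVec x r) * L with ha
  -- per-row moment bound
  have hrow : ∀ r : Fin m,
      (D.map (fun q => q.1 * Real.exp (s * A.mulVec q.2 r))).sum ≤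
        Real.exp (s * a r - (u + 1/2)) := by
    intro r
    set lam : Fin n → ℝ := fun j => Real.exp (s * A r j) - 1 with hlam
    have hlam0 : ∀ j, 0 ≤ lam j := by
      intro j
      have : (0:ℝ) ≤ s * A r j := mul_nonneg hs0.le (hA r j).1.1
      have := Real.one_le_exp this
      simp only [hlam]
      linarith
    have hmom := hD3 lam hlam0
    -- each distribution element's product is exp(s * row value)
    have hconv : (D.map (fun q => q.1 * Real.exp (s * A.mulVec q.2 r))).sum =
        (D.map (fun q => q.1 * ∏ j, (1 + lam j * q.2 j))).sum := by
      congr 1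
      apply Multiset.map_congr rfl
      intro q hq
      congr 1
      have h01 := (hD2 q hq).1
      have : ∀ j, 1 + lam j * q.2 j = Real.exp (s * (A r j * q.2 j)) := by
        intro j
        rcases h01 j with h | h
        · rw [h]; simp
        · rw [h]; simp [hlam]
      rw [Finset.prod_congr rfl (fun j _ => this j), ← Real.exp_sum]
      congr 1
      rw [Matrix.mulVec, dotProduct, Finset.mul_sum]
    -- product at x is at most exp((e^s - 1) μ)
    set μ := A.mulVec x r with hμ
    have hprodx : ∏ j, (1 + lam j * x j) ≤ Real.exp ((Real.exp s - 1) * μ) := by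
      calc ∏ j, (1 + lam j * x j) ≤ ∏ j, Real.exp (lam j * x j) := by
            apply Finset.prod_le_prod
            · intro j _
              have := mul_nonneg (hlam0 j) (hx j).1.1
              linarith
            · intro j _
              linarith [Real.add_one_le_exp (lam j * x j)]
        _ = Real.exp (∑ j, lam j * x j) := (Real.exp_sum _ _).symm
        _ ≤ Real.exp ((Real.exp s - 1) * μ) := by
            apply Real.exp_le_exp.mpr
            rw [hμ, Matrix.mulVec, dotProduct, Finset.mul_sum]
            apply Finset.sum_le_sum
            intro j _
            have hconvj : lam j ≤ A r j * (Real.exp s - 1) := by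
              have := exp_convex_aux s (A r j) (hA r j).1.1 (hA r j).1.2
              simp only [hlam]
              linarith
            have := mul_le_mul_of_nonneg_right hconvj (hx j).1.1
            calc lam j * x j ≤ A r j * (Real.exp s - 1) * x j := this
              _ = (Real.exp s - 1) * (A r j * x j) := by ring
          -- note: dotProduct is ∑ j, A r j * x j
    -- exponent comparison
    have hexp : (Real.exp s - 1) * μ ≤ s * a r - (u + 1/2) := by
      set M := max 1 μ with hM
      have hM1 : 1 ≤ M := le_max_left _ _
      have hμM : μ ≤ M := le_max_right _ _
      have h1 : (Real.exp s - 1) * μ ≤ (Real.exp s - 1) * M :=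
        mul_le_mul_of_nonneg_left hμM (by linarith)
      have h2 : M * (Real.exp s - 1 + u + 1/2) ≤ M * (3 * s * L) :=
        mul_le_mul_of_nonneg_left hkey (by linarith)
      have h3 : u + 1/2 ≤ M * (u + 1/2) := by nlinarith
      have h4 : s * a r = M * (3 * s * L) := by rw [ha]; ring
      nlinarith
    calc (D.map (fun q => q.1 * Real.exp (s * A.mulVec q.2 r))).sum
        ≤ Real.exp ((Real.exp s - 1) * μ) := by rw [hconv]; exact le_trans hmom hprodx
      _ ≤ Real.exp (s * a r - (u + 1/2)) := Real.exp_le_exp.mpr hexp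
  -- main argument: some support point is good for all rows
  by_contra hcon
  push_neg at hcon
  -- every support vector has a bad row
  have hstepA : (D.map Prod.fst).sum ≤
      (D.map (fun q => q.1 * ∑ r, Real.exp (s * A.mulVec q.2 r - s * a r))).sum := by
    apply Multiset.sum_map_le_sum_map
    intro q hq
    obtain ⟨r0, hr0⟩ := hcon q.2 (hD2 q hq).1 (hD2 q hq).2
    have hbad : a r0 < A.mulVec q.2 r0 := by
      simp only [ha]
      exact hr0
    have hterm : 1 ≤ Real.exp (s * A.mulVec q.2 r0 - s * a r0) := by
      apply Real.one_le_exp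
      have heq : s * A.mulVec q.2 r0 - s * a r0 = s * (A.mulVec q.2 r0 - a r0) := by ring
      rw [heq]
      exact mul_nonneg hs0.le (by linarith)
    have hsum1 : 1 ≤ ∑ r, Real.exp (s * A.mulVec q.2 r - s * a r) := by
      calc (1:ℝ) ≤ Real.exp (s * A.mulVec q.2 r0 - s * a r0) := hterm
        _ ≤ ∑ r, Real.exp (s * A.mulVec q.2 r - s * a r) :=
            Finset.single_le_sum (f := fun r => Real.exp (s * A.mulVec q.2 r - s * a r))
              (fun r _ => (Real.exp_pos _).le) (Finset.mem_univ r0)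
    exact le_mul_of_one_le_right (hD0 q hq) hsum1
  have hstepB : (D.map (fun q => q.1 * ∑ r, Real.exp (s * A.mulVec q.2 r - s * a r))).sum
      = ∑ r, (D.map (fun q => q.1 * Real.exp (s * A.mulVec q.2 r - s * a r))).sum := by
    rw [← multiset_sum_swap D (fun r q => q.1 * Real.exp (s * A.mulVec q.2 r - s * a r))]
    congr 1
    apply Multiset.map_congr rfl
    intro q _
    rw [Finset.mul_sum]
  have hstepC : ∀ r : Fin m,
      (D.map (fun q => q.1 * Real.exp (s * A.mulVec q.2 r - s * a r))).sum ≤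
        Real.exp (-(u + 1/2)) := by
    intro r
    have he : (D.map (fun q => q.1 * Real.exp (s * A.mulVec q.2 r - s * a r))).sum
        = Real.exp (-(s * a r)) * (D.map (fun q => q.1 * Real.exp (s * A.mulVec q.2 r))).sum := by
      rw [← Multiset.sum_map_mul_left]
      apply congrArg
      apply Multiset.map_congr rfl
      intro q _
      rw [show s * A.mulVec q.2 r - s * a r = -(s * a r) + s * A.mulVec q.2 r by ring,
        Real.exp_add]
      ring
    rw [he]
    calc Real.exp (-(s * a r)) * (D.map (fun q => q.1 * Real.exp (s * A.mulVec q.2 r))).sum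
        ≤ Real.exp (-(s * a r)) * Real.exp (s * a r - (u + 1/2)) :=
          mul_le_mul_of_nonneg_left (hrow r) (Real.exp_pos _).le
      _ = Real.exp (-(u + 1/2)) := by
          rw [← Real.exp_add]
          congr 1
          ring
  have hfinal : (1:ℝ) ≤ Real.exp (-(1/2)) := by
    have h5 : (1:ℝ) ≤ ∑ _r : Fin m, Real.exp (-(u + 1/2)) := by
      calc (1:ℝ) = (D.map Prod.fst).sum := hD1.symm
        _ ≤ (D.map (fun q => q.1 * ∑ r, Real.exp (s * A.mulVec q.2 r - s * a r))).sum := hstepA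
        _ = ∑ r, (D.map (fun q => q.1 * Real.exp (s * A.mulVec q.2 r - s * a r))).sum := hstepB
        _ ≤ ∑ _r : Fin m, Real.exp (-(u + 1/2)) := Finset.sum_le_sum (fun r _ => hstepC r)
    have h6 : ∑ _r : Fin m, Real.exp (-(u + 1/2)) = m * Real.exp (-(u + 1/2)) := by
      rw [Finset.sum_const, Finset.card_univ, Fintype.card_fin, nsmul_eq_mul]
    have h7 : (m:ℝ) * Real.exp (-(u + 1/2)) = Real.exp (-(1/2)) := by
      rw [show -(u + 1/2) = -u + -(1/2) by ring, Real.exp_add, Real.exp_neg, hu,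
        Real.exp_log hm0]
      field_simp
    rw [h6, h7] at h5
    exact h5
  have : Real.exp (-(1/2)) < 1 := Real.exp_lt_one_iff.mpr (by norm_num)
  linarith
end

section
/- Let an instance of the Min-Max Selecting Items problem be given with n items, K ≥ 1 scenarios, and selection size p, and let C ≥ 0. If the linear program LP_C is feasible, then there exists a set P ⊆ I_C with |P| = p such that for every scenario S one has c(P,S) ≤ C · (1 + e·ln(2K)/ln(e·ln(2K))). -/
set_option maxHeartbeats 1000000


open scoped Classical

/-- For `C ≥ 0`, the set `I_C` of items whose cost is at most `C` in every scenario. -/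
noncomputable def itemsAtMost {n K : ℕ} (c : Fin K → Fin n → ℝ) (C : ℝ) : Finset (Fin n) :=
  Finset.univ.filter (fun i => ∀ S : Fin K, c S i ≤ C)

/-- The linear program `LP_C` is feasible: there is `x` with `x_i ∈ [0,1]` for `i ∈ I_C`,
`∑_{i ∈ I_C} x_i = p` and `∑_{i ∈ I_C} c_{S,i} x_i ≤ C` for every scenario `S`. -/
noncomputable def LPfeasible {n K : ℕ} (c : Fin K → Fin n → ℝ) (p : ℕ) (C : ℝ) : Prop :=
  ∃ x : Fin n → ℝ,
    (∀ i ∈ itemsAtMost c C, x i ∈ Set.Icc (0 : ℝ) 1) ∧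
    (∑ i ∈ itemsAtMost c C, x i) = (p : ℝ) ∧
    ∀ S : Fin K, (∑ i ∈ itemsAtMost c C, c S i * x i) ≤ C

section Aux

variable {ι : Type*} [DecidableEq ι]

/-- Sum of a 0/1-valued function equals the number of ones. -/
lemma sum_of_boolean (A : Finset ι) (x : ι → ℝ) (h : ∀ i ∈ A, x i = 0 ∨ x i = 1) :
    ∑ i ∈ A, x i = ((A.filter fun i => x i = 1).card : ℝ) := by
  rw [← Finset.sum_filter_add_sum_filter_not A (fun i => x i = 1) x]
  have h1 : ∑ i ∈ A.filter (fun i => x i = 1), x i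
      = ((A.filter fun i => x i = 1).card : ℝ) := by
    rw [Finset.sum_congr rfl (fun i hi => (Finset.mem_filter.1 hi).2)]
    simp
  have h2 : ∑ i ∈ A.filter (fun i => ¬ x i = 1), x i = 0 := by
    apply Finset.sum_eq_zero
    intro i hi
    rcases h i (Finset.mem_filter.1 hi).1 with h0 | h1
    · exact h0
    · exact absurd h1 (Finset.mem_filter.1 hi).2
  rw [h1, h2, add_zero]

/-- The integral case of pipage rounding. -/
lemma pipage_integral {K : ℕ} (z : Fin K → ι → ℝ) (p : ℕ) (I : Finset ι) (x : ι → ℝ)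
    (hint : ∀ i ∈ I, x i = 0 ∨ x i = 1) (hsum : (∑ i ∈ I, x i) = (p : ℝ)) :
    ∃ P ⊆ I, P.card = p ∧ ∀ S, (∏ i ∈ P, (1 + z S i)) = ∏ i ∈ I, (1 + x i * z S i) := by
  refine ⟨I.filter (fun i => x i = 1), Finset.filter_subset _ _, ?_, ?_⟩
  · have h := sum_of_boolean I x hint
    rw [hsum] at h
    exact_mod_cast h.symm
  · intro S
    rw [← Finset.prod_filter_mul_prod_filter_not I (fun i => x i = 1) (fun i => 1 + x i * z S i)]
    have h1 : ∏ i ∈ I.filter (fun i => x i = 1), (1 + x i * z S i)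
        = ∏ i ∈ I.filter (fun i => x i = 1), (1 + z S i) :=
      Finset.prod_congr rfl (fun i hi => by rw [(Finset.mem_filter.1 hi).2, one_mul])
    have h2 : ∏ i ∈ I.filter (fun i => ¬ x i = 1), (1 + x i * z S i) = 1 := by
      apply Finset.prod_eq_one
      intro i hi
      rcases hint i (Finset.mem_filter.1 hi).1 with h0 | h1
      · rw [h0]; ring
      · exact absurd h1 (Finset.mem_filter.1 hi).2
    rw [h1, h2, mul_one]

/-- Pipage rounding: a fractional point of the selection polytope can be rounded to an
integral one without increasing the exponential potential. -/
lemma pipage_s2 {K : ℕ} (z : Fin K → ι → ℝ) (hz : ∀ S i, 0 ≤ z S i) (p : ℕ) (I : Finset ι) :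
    ∀ (N : ℕ) (x : ι → ℝ),
      (I.filter (fun i => x i ≠ 0 ∧ x i ≠ 1)).card ≤ N →
      (∀ i ∈ I, x i ∈ Set.Icc (0 : ℝ) 1) →
      (∑ i ∈ I, x i) = (p : ℝ) →
      ∃ P ⊆ I, P.card = p ∧
        (∑ S, ∏ i ∈ P, (1 + z S i)) ≤ ∑ S, ∏ i ∈ I, (1 + x i * z S i) := by
  intro N
  induction N with
  | zero =>
    intro x hcard hx01 hsum
    have hint : ∀ i ∈ I, x i = 0 ∨ x i = 1 := by
      intro i hi
      by_contra h
      push_neg at h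
      have hmem : i ∈ I.filter (fun i => x i ≠ 0 ∧ x i ≠ 1) := Finset.mem_filter.2 ⟨hi, h⟩
      have := Finset.card_pos.2 ⟨i, hmem⟩
      omega
    obtain ⟨P, hPI, hPcard, hprod⟩ := pipage_integral z p I x hint hsum
    exact ⟨P, hPI, hPcard, le_of_eq (Finset.sum_congr rfl fun S _ => hprod S)⟩
  | succ N ih =>
    intro x hcard hx01 hsum
    by_cases hle : (I.filter (fun i => x i ≠ 0 ∧ x i ≠ 1)).card ≤ N
    · exact ih x hle hx01 hsum
    push_neg at hle
    obtain ⟨i, hiF⟩ := Finset.card_pos.1 (by omega :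
      0 < (I.filter (fun i => x i ≠ 0 ∧ x i ≠ 1)).card)
    have hiI : i ∈ I := (Finset.mem_filter.1 hiF).1
    have hxi : x i ≠ 0 ∧ x i ≠ 1 := (Finset.mem_filter.1 hiF).2
    have hxi0 : 0 < x i := lt_of_le_of_ne (hx01 i hiI).1 (Ne.symm hxi.1)
    have hxi1 : x i < 1 := lt_of_le_of_ne (hx01 i hiI).2 hxi.2
    -- there is a second fractional item
    have hexj : ∃ j ∈ I.filter (fun i => x i ≠ 0 ∧ x i ≠ 1), j ≠ i := by
      by_contra hcon
      push_neg at hcon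
      have hFeq : I.filter (fun i => x i ≠ 0 ∧ x i ≠ 1) = {i} :=
        Finset.eq_singleton_iff_unique_mem.2 ⟨hiF, fun j hj => hcon j hj⟩
      have hsplit := Finset.sum_filter_add_sum_filter_not I (fun k => x k ≠ 0 ∧ x k ≠ 1) x
      rw [hFeq, Finset.sum_singleton] at hsplit
      have hboole : ∀ k ∈ I.filter (fun k => ¬ (x k ≠ 0 ∧ x k ≠ 1)), x k = 0 ∨ x k = 1 := by
        intro k hk
        have := (Finset.mem_filter.1 hk).2
        tauto
      have hbsum := sum_of_boolean _ x hboole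
      rw [hbsum] at hsplit
      set m := ((I.filter (fun k => ¬ (x k ≠ 0 ∧ x k ≠ 1))).filter fun k => x k = 1).card with hm
      rw [hsum] at hsplit
      -- x i + m = p with 0 < x i < 1, impossible
      rcases le_or_gt p m with hpm | hmp
      · have : (p : ℝ) ≤ (m : ℝ) := by exact_mod_cast hpm
        linarith
      · have : (m : ℝ) + 1 ≤ (p : ℝ) := by exact_mod_cast hmp
        linarith
    obtain ⟨j, hjF, hji⟩ := hexj
    have hjI : j ∈ I := (Finset.mem_filter.1 hjF).1
    have hxj : x j ≠ 0 ∧ x j ≠ 1 := (Finset.mem_filter.1 hjF).2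
    have hxj0 : 0 < x j := lt_of_le_of_ne (hx01 j hjI).1 (Ne.symm hxj.1)
    have hxj1 : x j < 1 := lt_of_le_of_ne (hx01 j hjI).2 hxj.2
    have hjmem : j ∈ I.erase i := Finset.mem_erase.2 ⟨hji, hjI⟩
    set rest := (I.erase i).erase j with hrest
    have hrestI : ∀ k ∈ rest, k ∈ I := fun k hk =>
      Finset.mem_of_mem_erase (Finset.mem_of_mem_erase hk)
    have hrestne : ∀ k ∈ rest, k ≠ i ∧ k ≠ j := by
      intro k hk
      exact ⟨(Finset.mem_erase.1 (Finset.mem_of_mem_erase hk)).1, (Finset.mem_erase.1 hk).1⟩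
    set R : Fin K → ℝ := fun S => ∏ k ∈ rest, (1 + x k * z S k) with hR
    have hR0 : ∀ S, 0 ≤ R S := by
      intro S
      apply Finset.prod_nonneg
      intro k hk
      have := (hx01 k (hrestI k hk)).1
      have := hz S k
      nlinarith
    set B : ℝ := ∑ S, (z S i * (1 + x j * z S j) - z S j * (1 + x i * z S i)) * R S with hB
    set W : ℝ := ∑ S, z S i * z S j * R S with hW
    have hW0 : 0 ≤ W := by
      apply Finset.sum_nonneg
      intro S _
      exact mul_nonneg (mul_nonneg (hz S i) (hz S j)) (hR0 S)
    set ε : ℝ := if 0 ≤ B then -(min (x i) (1 - x j)) else min (1 - x i) (x j) with hε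
    have hminpos1 : 0 < min (x i) (1 - x j) := lt_min hxi0 (by linarith)
    have hminpos2 : 0 < min (1 - x i) (x j) := lt_min (by linarith) hxj0
    have hεB : ε * B ≤ 0 := by
      rw [hε]
      split_ifs with hBs
      · exact mul_nonpos_of_nonpos_of_nonneg (by linarith) hBs
      · exact mul_nonpos_of_nonneg_of_nonpos (by linarith) (by linarith [not_le.1 hBs])
    have hεa : -(x i) ≤ ε := by
      rw [hε]; split_ifs
      · have := min_le_left (x i) (1 - x j); linarith
      · linarith
    have hεb : ε ≤ 1 - x i := by
      rw [hε]; split_ifs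
      · linarith
      · have := min_le_left (1 - x i) (x j); linarith
    have hεc : x j - 1 ≤ ε := by
      rw [hε]; split_ifs
      · have := min_le_right (x i) (1 - x j); linarith
      · linarith
    have hεd : ε ≤ x j := by
      rw [hε]; split_ifs
      · linarith
      · have := min_le_right (1 - x i) (x j); linarith
    set x' : ι → ℝ := fun k => if k = i then x i + ε else if k = j then x j - ε else x k with hx'
    have hx'i : x' i = x i + ε := by rw [hx']; simp
    have hx'j : x' j = x j - ε := by rw [hx']; simp [hji]
    have hx'other : ∀ k, k ≠ i → k ≠ j → x' k = x k := by
      intro k h1 h2; rw [hx']; simp [h1, h2]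
    -- one of the two endpoints becomes integral
    have hgain : (x' i = 0 ∨ x' i = 1) ∨ (x' j = 0 ∨ x' j = 1) := by
      rw [hx'i, hx'j, hε]
      split_ifs
      · rcases min_cases (x i) (1 - x j) with ⟨hm, _⟩ | ⟨hm, _⟩
        · left; left; rw [hm]; ring
        · right; right; rw [hm]; ring
      · rcases min_cases (1 - x i) (x j) with ⟨hm, _⟩ | ⟨hm, _⟩
        · left; right; rw [hm]; ring
        · right; left; rw [hm]; ring
    -- the witness whose value became integral
    obtain ⟨w, hwij, hwint⟩ : ∃ w, (w = i ∨ w = j) ∧ (x' w = 0 ∨ x' w = 1) := by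
      rcases hgain with h | h
      · exact ⟨i, Or.inl rfl, h⟩
      · exact ⟨j, Or.inr rfl, h⟩
    have hwF : w ∈ I.filter (fun i => x i ≠ 0 ∧ x i ≠ 1) := by
      rcases hwij with rfl | rfl
      · exact hiF
      · exact hjF
    -- new fractional count decreased
    have hcard' : (I.filter (fun k => x' k ≠ 0 ∧ x' k ≠ 1)).card ≤ N := by
      have hsub : I.filter (fun k => x' k ≠ 0 ∧ x' k ≠ 1)
          ⊆ (I.filter (fun i => x i ≠ 0 ∧ x i ≠ 1)).erase w := by
        intro k hk
        obtain ⟨hkI, hk2⟩ := Finset.mem_filter.1 hk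
        have hkw : k ≠ w := by
          intro h
          rw [h] at hk2
          rcases hwint with h0 | h1
          · exact hk2.1 h0
          · exact hk2.2 h1
        apply Finset.mem_erase.2
        refine ⟨hkw, Finset.mem_filter.2 ⟨hkI, ?_⟩⟩
        by_cases hki : k = i
        · subst hki; exact hxi
        · by_cases hkj : k = j
          · subst hkj; exact hxj
          · rwa [hx'other k hki hkj] at hk2
      have h1 := Finset.card_le_card hsub
      rw [Finset.card_erase_of_mem hwF] at h1
      omega
    -- bounds for the new point
    have hx'01 : ∀ k ∈ I, x' k ∈ Set.Icc (0 : ℝ) 1 := by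
      intro k hk
      by_cases hki : k = i
      · subst hki; rw [hx'i]; constructor <;> linarith
      · by_cases hkj : k = j
        · subst hkj; rw [hx'j]; constructor <;> linarith
        · rw [hx'other k hki hkj]; exact hx01 k hk
    -- splitting sums and products at i and j
    have hsplitsum : ∀ y : ι → ℝ, ∑ k ∈ I, y k = y i + (y j + ∑ k ∈ rest, y k) := by
      intro y
      rw [← Finset.add_sum_erase I y hiI, ← Finset.add_sum_erase (I.erase i) y hjmem]
    have hsplitprod : ∀ f : ι → ℝ, ∏ k ∈ I, f k = f i * (f j * ∏ k ∈ rest, f k) := by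
      intro f
      rw [← Finset.mul_prod_erase I f hiI, ← Finset.mul_prod_erase (I.erase i) f hjmem]
    -- sum preserved
    have hsum' : (∑ k ∈ I, x' k) = (p : ℝ) := by
      rw [hsplitsum x', hx'i, hx'j]
      have : ∑ k ∈ rest, x' k = ∑ k ∈ rest, x k :=
        Finset.sum_congr rfl fun k hk => hx'other k (hrestne k hk).1 (hrestne k hk).2
      rw [this]
      rw [hsplitsum x] at hsum
      linarith
    -- potential does not increase
    have hkey : (∑ S, ∏ k ∈ I, (1 + x' k * z S k)) ≤ ∑ S, ∏ k ∈ I, (1 + x k * z S k) := by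
      have hprodeq : ∀ S : Fin K, ∏ k ∈ I, (1 + x' k * z S k)
          = ∏ k ∈ I, (1 + x k * z S k)
            + ε * ((z S i * (1 + x j * z S j) - z S j * (1 + x i * z S i)) * R S)
            - ε ^ 2 * (z S i * z S j * R S) := by
        intro S
        rw [hsplitprod (fun k => 1 + x' k * z S k), hsplitprod (fun k => 1 + x k * z S k)]
        have hRR : ∏ k ∈ rest, (1 + x' k * z S k) = R S := by
          rw [hR]
          exact Finset.prod_congr rfl fun k hk => by
            rw [hx'other k (hrestne k hk).1 (hrestne k hk).2]
        simp only [hRR, hx'i, hx'j, hR]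
        ring
      have htot : (∑ S, ∏ k ∈ I, (1 + x' k * z S k))
          = (∑ S, ∏ k ∈ I, (1 + x k * z S k)) + ε * B - ε ^ 2 * W := by
        rw [hB, hW, Finset.mul_sum, Finset.mul_sum, ← Finset.sum_add_distrib,
          ← Finset.sum_sub_distrib]
        exact Finset.sum_congr rfl fun S _ => hprodeq S
      have hsq : 0 ≤ ε ^ 2 * W := mul_nonneg (sq_nonneg ε) hW0
      linarith
    obtain ⟨P, hPI, hPcard, hPsum⟩ := ih x' hcard' hx'01 hsum'
    exact ⟨P, hPI, hPcard, le_trans hPsum hkey⟩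

end Aux

/-- `∏ (1 + f i) ≤ exp (∑ f i)` for nonnegative `f`. -/
lemma prod_one_add_le_exp {ι : Type*} (A : Finset ι) (f : ι → ℝ) (hf : ∀ i ∈ A, 0 ≤ f i) :
    (∏ i ∈ A, (1 + f i)) ≤ Real.exp (∑ i ∈ A, f i) := by
  rw [Real.exp_sum]
  apply Finset.prod_le_prod
  · intro i hi; linarith [hf i hi]
  · intro i hi; linarith [Real.add_one_le_exp (f i)]

/-- `exp (t y) ≤ 1 + y (exp t - 1)` for `y ∈ [0,1]`. -/
lemma exp_le_one_add_mul (y t : ℝ) (hy0 : 0 ≤ y) (hy1 : y ≤ 1) :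
    Real.exp (t * y) ≤ 1 + y * (Real.exp t - 1) := by
  have h := convexOn_exp.2 (Set.mem_univ (0 : ℝ)) (Set.mem_univ t)
    (sub_nonneg.2 hy1) hy0 (by ring)
  rw [smul_eq_mul, smul_eq_mul, smul_eq_mul, smul_eq_mul, mul_zero, zero_add,
    Real.exp_zero, mul_one] at h
  calc Real.exp (t * y) = Real.exp (y * t) := by rw [mul_comm]
    _ ≤ (1 - y) + y * Real.exp t := h
    _ = 1 + y * (Real.exp t - 1) := by ring

/-- The analytic inequality: a good choice of the Chernoff parameter `t`. -/
lemma key_t (K : ℕ) (hK : 1 ≤ K) : ∃ t : ℝ, 0 < t ∧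
    Real.log K + (Real.exp t - 1) ≤
      t * (1 + Real.exp 1 * Real.log (2 * K) / Real.log (Real.exp 1 * Real.log (2 * K))) := by
  have hK1 : (1 : ℝ) ≤ (K : ℝ) := by exact_mod_cast hK
  have hKpos : (0 : ℝ) < (K : ℝ) := by linarith
  set L : ℝ := Real.log (2 * K) with hLdef
  have hL2 : Real.log 2 ≤ L := by
    apply Real.log_le_log (by norm_num)
    linarith
  have hlog2 : (0.6931471803 : ℝ) < Real.log 2 := Real.log_two_gt_d9
  have hlog2' : Real.log 2 < 0.6931471808 := Real.log_two_lt_d9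
  have hL0 : 0 < L := by linarith
  have hlogK : Real.log K = L - Real.log 2 := by
    rw [hLdef, Real.log_mul (by norm_num) (by positivity)]
    ring
  have hE : (2.7182818283 : ℝ) < Real.exp 1 := Real.exp_one_gt_d9
  have hE' : Real.exp 1 < 2.7182818286 := Real.exp_one_lt_d9
  have hM : Real.log (Real.exp 1 * L) = 1 + Real.log L := by
    rw [Real.log_mul (Real.exp_ne_zero 1) (ne_of_gt hL0), Real.log_exp]
  have hlogL : -1 < Real.log L := by
    rw [← Real.log_exp (-1)]
    apply Real.log_lt_log (Real.exp_pos _)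
    have : Real.exp (-1) = 1 / Real.exp 1 := by
      rw [Real.exp_neg]; exact inv_eq_one_div _
    rw [this]
    rw [div_lt_iff₀ (by positivity)]
    nlinarith
  have hM0 : 0 < 1 + Real.log L := by linarith
  -- lower bound for log L
  have hlogLlb : 1 - 1 / L ≤ Real.log L := by
    have h := Real.log_le_sub_one_of_pos (show (0:ℝ) < 1 / L by positivity)
    rw [Real.log_div one_ne_zero (ne_of_gt hL0), Real.log_one] at h
    linarith
  rcases le_or_gt L (Real.exp 1) with hcase | hcase
  · -- Case 1 : L ≤ e, take t = 1 + log L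
    refine ⟨1 + Real.log L, hM0, ?_⟩
    have hexpt : Real.exp (1 + Real.log L) = Real.exp 1 * L := by
      rw [Real.exp_add, Real.exp_log hL0]
    rw [hM, hexpt, hlogK]
    have hdiv : (1 + Real.log L) * (1 + Real.exp 1 * L / (1 + Real.log L))
        = (1 + Real.log L) + Real.exp 1 * L := by
      field_simp
    rw [hdiv]
    -- need : L - log 2 + (e L - 1) ≤ 1 + log L + e L, i.e. L - log 2 ≤ 2 + log L
    -- use log L ≥ 1 - 1/L and L + 1/L ≤ 3 + log 2
    have hquad : 1 ≤ (3 + Real.log 2 - L) * L := by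
      nlinarith [mul_nonneg (by linarith : (0:ℝ) ≤ L - Real.log 2)
        (by linarith : (0:ℝ) ≤ Real.exp 1 - L)]
    have hinv : 1 / L ≤ 3 + Real.log 2 - L := by
      rw [div_le_iff₀ hL0]
      linarith [hquad]
    linarith
  · -- Case 2 : L > e, take t = log L
    have hu1 : 1 < Real.log L := by
      rw [← Real.log_exp 1]
      exact Real.log_lt_log (Real.exp_pos 1) hcase
    set u : ℝ := Real.log L with hu
    have hu0 : 0 < u := by linarith
    refine ⟨u, hu0, ?_⟩
    have hexpt : Real.exp u = L := Real.exp_log hL0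
    rw [hM, hexpt, hlogK]
    -- goal : L - log 2 + (L - 1) ≤ u * (1 + e L / (1 + u))
    have h1u : (0:ℝ) < 1 + u := by linarith
    -- main polynomial inequality
    have hmain : (2 * L - 1 - Real.log 2 - u) * (1 + u) ≤ Real.exp 1 * L * u := by
      -- equivalent form : L * (2 - (e-2) u) ≤ 1 + log2 + (2 + log2) u + u^2 - stuff
      have hform : L * (2 - (Real.exp 1 - 2) * u)
          ≤ 1 + Real.log 2 + (2 + Real.log 2) * u + u ^ 2 := by
        rcases le_or_gt (2 - (Real.exp 1 - 2) * u) 0 with hneg | hpos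
        · have : L * (2 - (Real.exp 1 - 2) * u) ≤ 0 := mul_nonpos_of_nonneg_of_nonpos hL0.le hneg
          nlinarith
        · -- here u < 2/(e-2) < 3, use the chord bound for exp on [1,3]
          have hu3 : u < 3 := by nlinarith
          have hchord : L ≤ ((3 - u) * Real.exp 1 + (u - 1) * Real.exp 3) / 2 := by
            have h := convexOn_exp.2 (Set.mem_univ (1 : ℝ)) (Set.mem_univ (3 : ℝ))
              (by linarith : (0:ℝ) ≤ (3 - u) / 2) (by linarith : (0:ℝ) ≤ (u - 1) / 2)
              (by ring)
            rw [smul_eq_mul, smul_eq_mul, smul_eq_mul, smul_eq_mul] at h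
            have harg : (3 - u) / 2 * 1 + (u - 1) / 2 * 3 = u := by ring
            rw [harg, hexpt] at h
            calc L ≤ (3 - u) / 2 * Real.exp 1 + (u - 1) / 2 * Real.exp 3 := h
              _ = ((3 - u) * Real.exp 1 + (u - 1) * Real.exp 3) / 2 := by ring
          have he3 : Real.exp 3 = Real.exp 1 ^ 3 := by
            rw [← Real.exp_nat_mul]; norm_num
          have he3u : Real.exp 3 < 20.0856 := by
            rw [he3]
            calc Real.exp 1 ^ 3 < 2.7182818286 ^ 3 :=
                  pow_lt_pow_left₀ hE' (by linarith) (by norm_num)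
              _ < 20.0856 := by norm_num
          have hchordnum : L ≤ ((3 - u) * 2.7182818286 + (u - 1) * 20.0856) / 2 := by
            refine le_trans hchord ?_
            have h31 : (0:ℝ) ≤ 3 - u := by linarith
            have h1u' : (0:ℝ) ≤ u - 1 := by linarith
            nlinarith [mul_le_mul_of_nonneg_left hE'.le h31,
              mul_le_mul_of_nonneg_left he3u.le h1u']
          have hfac : 2 - (Real.exp 1 - 2) * u ≤ 2 - 0.7182818283 * u := by nlinarith
          have hcnum0 : (0:ℝ) ≤ ((3 - u) * 2.7182818286 + (u - 1) * 20.0856) / 2 := by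
            nlinarith
          have hstep : L * (2 - (Real.exp 1 - 2) * u)
              ≤ (((3 - u) * 2.7182818286 + (u - 1) * 20.0856) / 2) * (2 - 0.7182818283 * u) := by
            calc L * (2 - (Real.exp 1 - 2) * u)
                ≤ (((3 - u) * 2.7182818286 + (u - 1) * 20.0856) / 2)
                    * (2 - (Real.exp 1 - 2) * u) :=
                  mul_le_mul_of_nonneg_right hchordnum hpos.le
              _ ≤ _ := mul_le_mul_of_nonneg_left hfac hcnum0
          refine le_trans hstep ?_
          nlinarith [sq_nonneg (u - 1.31),
            mul_nonneg (by linarith : (0:ℝ) ≤ Real.log 2 - 0.6931471803) hu0.le]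
      nlinarith [hform]
    -- divide back by 1 + u
    have h2 : (2 * L - 1 - Real.log 2 - u) ≤ Real.exp 1 * L * u / (1 + u) := by
      rw [le_div_iff₀ h1u]
      exact hmain
    have h3 : u * (1 + Real.exp 1 * L / (1 + u)) = u + Real.exp 1 * L * u / (1 + u) := by
      field_simp
    rw [h3]
    linarith

/-- **Approximation guarantee from LP feasibility.** If `LP_C` of a Min-Max Selecting
Items instance with `K ≥ 1` scenarios is feasible, then there is a set `P ⊆ I_C` of
exactly `p` items whose cost in every scenario is at most
`C · (1 + e·ln(2K)/ln(e·ln(2K)))`. -/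
theorem selecting_items_approx
    (n K p : ℕ) (hK : 1 ≤ K) (hp : 1 ≤ p) (hpn : p ≤ n)
    (c : Fin K → Fin n → ℝ)
    (hc : ∀ S i, 0 ≤ c S i)
    (C : ℝ) (hC : 0 ≤ C)
    (hfeas : LPfeasible c p C) :
    ∃ P : Finset (Fin n),
      P ⊆ itemsAtMost c C ∧
      P.card = p ∧
      ∀ S : Fin K, (∑ i ∈ P, c S i) ≤
        C * (1 + Real.exp 1 * Real.log (2 * K) / Real.log (Real.exp 1 * Real.log (2 * K))) := by
  obtain ⟨x, hx01, hxsum, hxcost⟩ := hfeas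
  set I := itemsAtMost c C with hI
  have hcIC : ∀ i ∈ I, ∀ S, c S i ≤ C := by
    intro i hi S
    exact (Finset.mem_filter.1 hi).2 S
  rcases eq_or_lt_of_le hC with hC0 | hCpos
  · -- degenerate case C = 0
    have hczero : ∀ i ∈ I, ∀ S, c S i = 0 := fun i hi S =>
      le_antisymm (by have h := hcIC i hi S; rw [← hC0] at h; exact h) (hc S i)
    have hpcard : p ≤ I.card := by
      have h1 : (p : ℝ) ≤ (I.card : ℝ) := by
        rw [← hxsum]
        calc ∑ i ∈ I, x i ≤ ∑ i ∈ I, 1 :=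
              Finset.sum_le_sum (fun i hi => (hx01 i hi).2)
          _ = (I.card : ℝ) := by simp
      exact_mod_cast h1
    obtain ⟨P, hPI, hPcard⟩ := Finset.exists_subset_card_eq hpcard
    refine ⟨P, hPI, hPcard, fun S => ?_⟩
    have hz : ∑ i ∈ P, c S i = 0 := Finset.sum_eq_zero (fun i hi => hczero i (hPI hi) S)
    rw [hz, ← hC0, zero_mul]
  · -- main case C > 0
    obtain ⟨t, ht, hkey⟩ := key_t K hK
    have hexpt1 : (1 : ℝ) ≤ Real.exp t := Real.one_le_exp ht.le
    set z : Fin K → Fin n → ℝ := fun S i => (c S i / C) * (Real.exp t - 1) with hz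
    have hz0 : ∀ S i, 0 ≤ z S i := fun S i =>
      mul_nonneg (div_nonneg (hc S i) hC) (by linarith)
    obtain ⟨P, hPI, hPcard, hPsum⟩ :=
      pipage_s2 z hz0 p I (I.filter (fun i => x i ≠ 0 ∧ x i ≠ 1)).card x le_rfl hx01 hxsum
    refine ⟨P, hPI, hPcard, fun S => ?_⟩
    -- step 1 : exp (t · scaled cost) ≤ product over P
    have h1 : Real.exp (t * ∑ i ∈ P, c S i / C) ≤ ∏ i ∈ P, (1 + z S i) := by
      rw [Finset.mul_sum, Real.exp_sum]
      apply Finset.prod_le_prod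
      · intro i _; exact (Real.exp_pos _).le
      · intro i hi
        exact exp_le_one_add_mul (c S i / C) t (div_nonneg (hc S i) hC)
          ((div_le_one hCpos).2 (hcIC i (hPI hi) S))
    -- step 2 : single product ≤ sum over scenarios
    have h2 : (∏ i ∈ P, (1 + z S i)) ≤ ∑ S', ∏ i ∈ P, (1 + z S' i) := by
      apply Finset.single_le_sum (f := fun S' => ∏ i ∈ P, (1 + z S' i))
      · intro S' _
        apply Finset.prod_nonneg
        intro i _
        have := hz0 S' i
        linarith
      · exact Finset.mem_univ S
    -- step 3 : fractional potential is at most K · exp (exp t - 1)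
    have h3 : (∑ S', ∏ i ∈ I, (1 + x i * z S' i)) ≤ (K : ℝ) * Real.exp (Real.exp t - 1) := by
      have hone : ∀ S' : Fin K, (∏ i ∈ I, (1 + x i * z S' i)) ≤ Real.exp (Real.exp t - 1) := by
        intro S'
        have hstep : (∏ i ∈ I, (1 + x i * z S' i)) ≤ Real.exp (∑ i ∈ I, x i * z S' i) :=
          prod_one_add_le_exp I _ (fun i hi =>
            mul_nonneg (hx01 i hi).1 (hz0 S' i))
        refine le_trans hstep (Real.exp_le_exp.2 ?_)
        have heq : ∑ i ∈ I, x i * z S' i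
            = (Real.exp t - 1) / C * ∑ i ∈ I, c S' i * x i := by
          rw [Finset.mul_sum]
          apply Finset.sum_congr rfl
          intro i _
          rw [hz]
          ring
        rw [heq]
        have hbound : (Real.exp t - 1) / C * (∑ i ∈ I, c S' i * x i)
            ≤ (Real.exp t - 1) / C * C :=
          mul_le_mul_of_nonneg_left (hxcost S') (div_nonneg (by linarith) hCpos.le)
        rw [div_mul_cancel₀ _ (ne_of_gt hCpos)] at hbound
        exact hbound
      calc (∑ S', ∏ i ∈ I, (1 + x i * z S' i))
          ≤ ∑ _S' : Fin K, Real.exp (Real.exp t - 1) :=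
            Finset.sum_le_sum (fun S' _ => hone S')
        _ = (K : ℝ) * Real.exp (Real.exp t - 1) := by
            rw [Finset.sum_const, Finset.card_univ, Fintype.card_fin, nsmul_eq_mul]
    -- combine and take logarithms
    have hKpos : (0 : ℝ) < (K : ℝ) := by
      have : (1 : ℝ) ≤ (K : ℝ) := by exact_mod_cast hK
      linarith
    have hchain : Real.exp (t * ∑ i ∈ P, c S i / C)
        ≤ (K : ℝ) * Real.exp (Real.exp t - 1) :=
      le_trans (le_trans h1 h2) (le_trans hPsum h3)
    have hlog : t * (∑ i ∈ P, c S i / C) ≤ Real.log K + (Real.exp t - 1) := by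
      have h := Real.log_le_log (Real.exp_pos _) hchain
      rw [Real.log_exp, Real.log_mul (ne_of_gt hKpos) (Real.exp_ne_zero _),
        Real.log_exp] at h
      exact h
    have hfinal : (∑ i ∈ P, c S i / C)
        ≤ 1 + Real.exp 1 * Real.log (2 * K) / Real.log (Real.exp 1 * Real.log (2 * K)) := by
      have h := le_trans hlog hkey
      exact le_of_mul_le_mul_left (by linarith) ht
    have hsumeq : ∑ i ∈ P, c S i = C * ∑ i ∈ P, c S i / C := by
      rw [Finset.mul_sum]
      apply Finset.sum_congr rfl
      intro i _
      rw [mul_div_cancel₀ _ (ne_of_gt hCpos)]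
    rw [hsumeq]
    exact mul_le_mul_of_nonneg_left hfinal hC
end

section
/- Let k ≥ 2, p ≥ k, and n ≥ k² + (p−k) be integers, and consider the integrality-gap instance with scenarios S_T for T ∈ binom([k²], k). Define x ∈ [0,1]^n by x_i = 1/k for i ∈ [k²], x_i = 1 for k² < i ≤ k² + (p−k), and x_i = 0 otherwise. Then ∑_{i=1}^n x_i = p and ∑_{i=1}^n c_{S_T,i} x_i = 1 for every T ∈ binom([k²], k). In particular, since x is supported on I_1 = [k² + (p−k)], the linear program LP_1 of this instance is feasible. -/
open scoped Classical

/-- Item costs of the scenario `S_T` of the integrality-gap instance with parameters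
`k, p, n`: an item `i` costs `1` if `i ∈ T`, `0` if `i ∈ [k² + (p-k)] \ T`, and `2`
otherwise.  Items are `0`-indexed, so `[k² + (p-k)]` is `{i : (i : ℕ) < k² + (p-k)}`. -/
noncomputable def gapCost (k p : ℕ) {n : ℕ} (T : Finset (Fin n)) (i : Fin n) : ℝ :=
  if i ∈ T then 1 else if (i : ℕ) < k ^ 2 + (p - k) then 0 else 2

/-- `T` indexes a scenario of the integrality-gap instance: it is a `k`-element subset
of `[k²]`. -/
def gapScenario (k : ℕ) {n : ℕ} (T : Finset (Fin n)) : Prop :=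
  T.card = k ∧ ∀ i ∈ T, (i : ℕ) < k ^ 2

/-- The fractional solution of the integrality-gap instance: `x_i = 1/k` for `i ∈ [k²]`,
`x_i = 1` for `k² < i ≤ k² + (p-k)` and `x_i = 0` otherwise. -/
noncomputable def gapX (k p : ℕ) (n : ℕ) (i : Fin n) : ℝ :=
  if (i : ℕ) < k ^ 2 then (k : ℝ)⁻¹ else if (i : ℕ) < k ^ 2 + (p - k) then 1 else 0

/-- **Feasibility of `LP_1` for the integrality-gap instance.** The vector `x` satisfies
`∑ᵢ x_i = p` and `∑ᵢ c_{S_T,i} x_i = 1` for every scenario `S_T`; in particular `LP_1`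
of the instance is feasible. -/
theorem gap_lp_feasible
    (k p n : ℕ) (hk : 2 ≤ k) (hp : k ≤ p) (hn : k ^ 2 + (p - k) ≤ n) :
    (∑ i, gapX k p n i = (p : ℝ)) ∧
    (∀ T : Finset (Fin n), gapScenario k T →
      ∑ i, gapCost k p T i * gapX k p n i = 1) ∧
    (∃ x : Fin n → ℝ,
      (∀ i ∈ Finset.univ.filter
          (fun i : Fin n => ∀ T : Finset (Fin n), gapScenario k T → gapCost k p T i ≤ 1),
        x i ∈ Set.Icc (0 : ℝ) 1) ∧
      (∑ i ∈ Finset.univ.filter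
          (fun i : Fin n => ∀ T : Finset (Fin n), gapScenario k T → gapCost k p T i ≤ 1),
        x i) = (p : ℝ) ∧
      ∀ T : Finset (Fin n), gapScenario k T →
        (∑ i ∈ Finset.univ.filter
            (fun i : Fin n => ∀ T' : Finset (Fin n), gapScenario k T' → gapCost k p T' i ≤ 1),
          gapCost k p T i * x i) ≤ 1) := by

  have hk0 : (k : ℝ) ≠ 0 := Nat.cast_ne_zero.mpr (by omega)
  have hsum : ∑ i, gapX k p n i = (p : ℝ) := by
    have h1 : k ^ 2 ≤ k ^ 2 + (p - k) := Nat.le_add_right _ _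
    simp only [gapX]
    rw [Fin.sum_univ_eq_sum_range
      (fun j => if j < k ^ 2 then (k : ℝ)⁻¹ else if j < k ^ 2 + (p - k) then 1 else 0),
      Finset.range_eq_Ico, ← Finset.sum_Ico_consecutive _ (Nat.zero_le (k ^ 2 + (p - k))) hn,
      ← Finset.sum_Ico_consecutive _ (Nat.zero_le (k ^ 2)) h1]
    have e1 : ∑ j ∈ Finset.Ico 0 (k ^ 2),
        (if j < k ^ 2 then (k : ℝ)⁻¹ else if j < k ^ 2 + (p - k) then 1 else 0)
        = (k ^ 2 : ℕ) * (k : ℝ)⁻¹ := by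
      rw [Finset.sum_congr rfl (fun j hj => by
        simp only [Finset.mem_Ico] at hj; rw [if_pos hj.2]), Finset.sum_const, nsmul_eq_mul]
      simp
    have e2 : ∑ j ∈ Finset.Ico (k ^ 2) (k ^ 2 + (p - k)),
        (if j < k ^ 2 then (k : ℝ)⁻¹ else if j < k ^ 2 + (p - k) then 1 else 0)
        = ((p - k : ℕ) : ℝ) := by
      rw [Finset.sum_congr rfl (fun j hj => by
        simp only [Finset.mem_Ico] at hj
        rw [if_neg (by omega), if_pos hj.2]), Finset.sum_const, nsmul_eq_mul]
      simp
    have e3 : ∑ j ∈ Finset.Ico (k ^ 2 + (p - k)) n,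
        (if j < k ^ 2 then (k : ℝ)⁻¹ else if j < k ^ 2 + (p - k) then 1 else 0) = 0 := by
      apply Finset.sum_eq_zero
      intro j hj
      simp only [Finset.mem_Ico] at hj
      rw [if_neg (by omega), if_neg (by omega)]
    rw [e1, e2, e3, add_zero]
    have : ((k ^ 2 : ℕ) : ℝ) * (k : ℝ)⁻¹ = (k : ℝ) := by
      push_cast
      field_simp
    rw [this, Nat.cast_sub hp]
    ring
  have hscen : ∀ T : Finset (Fin n), gapScenario k T →
      ∑ i, gapCost k p T i * gapX k p n i = 1 := by
    rintro T ⟨hcard, hmem⟩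
    have hout : ∀ i ∈ Finset.univ, i ∉ T → gapCost k p T i * gapX k p n i = 0 := by
      intro i _ hi
      by_cases h : (i : ℕ) < k ^ 2 + (p - k)
      · simp [gapCost, hi, h]
      · have h2 : ¬ (i : ℕ) < k ^ 2 := by omega
        simp [gapX, h, h2]
    have hin : ∀ i ∈ T, gapCost k p T i * gapX k p n i = (k : ℝ)⁻¹ := by
      intro i hi
      have h1 : (i : ℕ) < k ^ 2 := hmem i hi
      simp [gapCost, gapX, hi, h1]
    rw [← Finset.sum_subset (Finset.subset_univ T) hout,
      Finset.sum_congr rfl hin, Finset.sum_const, hcard, nsmul_eq_mul]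
    field_simp
  refine ⟨hsum, hscen, gapX k p n, ?_, ?_, ?_⟩
  · intro i _
    have hk1 : (1 : ℝ) ≤ (k : ℝ) := by exact_mod_cast Nat.one_le_of_lt hk
    unfold gapX
    split_ifs with h1 h2
    · exact ⟨by positivity, inv_le_one_of_one_le₀ hk1⟩
    · exact ⟨zero_le_one, le_refl 1⟩
    · exact ⟨le_refl 0, zero_le_one⟩
  all_goals {
    have hzero : ∀ i : Fin n, i ∉ Finset.univ.filter
        (fun i : Fin n => ∀ T : Finset (Fin n), gapScenario k T → gapCost k p T i ≤ 1) →
        gapX k p n i = 0 := by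
      intro i hi
      simp only [Finset.mem_filter, Finset.mem_univ, true_and, not_forall] at hi
      obtain ⟨T, hT, hc⟩ := hi
      unfold gapCost at hc
      split_ifs at hc with h1 h2
      · exact absurd le_rfl hc
      · exact absurd (by norm_num) hc
      · have h3 : ¬ (i : ℕ) < k ^ 2 := by omega
        simp [gapX, h2, h3]
    first
    | (rw [Finset.sum_subset (Finset.filter_subset _ _) (fun i _ hi => hzero i hi)]; exact hsum)
    | (intro T hT
       rw [Finset.sum_subset (Finset.filter_subset _ _)
         (fun i _ hi => by rw [hzero i hi, mul_zero])]
       exact le_of_eq (hscen T hT)) }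
end

section
/- Let k ≥ 2, p ≥ k, and n ≥ k² + (p−k) be integers, and consider the integrality-gap instance with scenarios S_T for T ∈ binom([k²], k). Then every set P ⊆ [n] with |P| = p satisfying P ⊆ [k² + (p−k)] contains at least k elements of [k²]; consequently there exists T ∈ binom([k²], k) with T ⊆ P, and for this T one has c(P, S_T) ≥ k. -/
open scoped Classical

/-- **Cheap integral solutions are expensive in some scenario.** Every `p`-element set
`P ⊆ [k² + (p-k)]` contains at least `k` elements of `[k²]`; consequently some scenario
set `T` satisfies `T ⊆ P`, and for this `T` one has `c(P, S_T) ≥ k`. -/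
theorem gap_cheap_solution_cost
    (k p n : ℕ) (hk : 2 ≤ k) (hp : k ≤ p) (hn : k ^ 2 + (p - k) ≤ n)
    (P : Finset (Fin n)) (hPcard : P.card = p)
    (hPcheap : ∀ i ∈ P, (i : ℕ) < k ^ 2 + (p - k)) :
    k ≤ (P.filter (fun i => (i : ℕ) < k ^ 2)).card ∧
    ∃ T : Finset (Fin n), gapScenario k T ∧ T ⊆ P ∧
      (k : ℝ) ≤ ∑ i ∈ P, gapCost k p T i := by
  set A := P.filter (fun i : Fin n => (i : ℕ) < k ^ 2) with hA
  have hsplit : A.card + (P.filter (fun i : Fin n => ¬ (i : ℕ) < k ^ 2)).card = p := by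
    rw [hA, Finset.card_filter_add_card_filter_not, hPcard]
  have hBle : (P.filter (fun i : Fin n => ¬ (i : ℕ) < k ^ 2)).card ≤ p - k := by
    have hmap : (P.filter (fun i : Fin n => ¬ (i : ℕ) < k ^ 2)).image (fun i : Fin n => (i : ℕ))
        ⊆ Finset.Ico (k ^ 2) (k ^ 2 + (p - k)) := by
      intro x hx
      simp only [Finset.mem_image, Finset.mem_filter] at hx
      obtain ⟨i, ⟨hiP, hi2⟩, rfl⟩ := hx
      exact Finset.mem_Ico.2 ⟨Nat.le_of_not_lt hi2, hPcheap i hiP⟩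
    have hinj : (P.filter (fun i : Fin n => ¬ (i : ℕ) < k ^ 2)).card
        = ((P.filter (fun i : Fin n => ¬ (i : ℕ) < k ^ 2)).image (fun i : Fin n => (i : ℕ))).card := by
      rw [Finset.card_image_of_injective _ Fin.val_injective]
    calc (P.filter (fun i : Fin n => ¬ (i : ℕ) < k ^ 2)).card
        = _ := hinj
      _ ≤ (Finset.Ico (k ^ 2) (k ^ 2 + (p - k))).card := Finset.card_le_card hmap
      _ = p - k := by rw [Nat.card_Ico]; omega
  have hAk : k ≤ A.card := by omega
  constructor
  · have hbind : (do let a ← P; pure ((a : Fin n) : ℕ)) = P.image Fin.val := by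
      ext x; simp [Finset.mem_image]
    rw [hbind, Finset.filter_image]
    rwa [Finset.card_image_of_injective _ Fin.val_injective]
  obtain ⟨T, hTA, hTcard⟩ := Finset.exists_subset_card_eq hAk
  have hTP : T ⊆ P := hTA.trans (Finset.filter_subset _ _)
  refine ⟨T, ⟨hTcard, fun i hi => (Finset.mem_filter.1 (hTA hi)).2⟩, hTP, ?_⟩
  have hsum : ∑ i ∈ T, gapCost k p T i = (k : ℝ) := by
    have h1 : ∀ i ∈ T, gapCost k p T i = 1 := fun i hi => by simp [gapCost, hi]
    rw [Finset.sum_congr rfl h1, Finset.sum_const, hTcard, nsmul_eq_mul, mul_one]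
  calc (k : ℝ) = ∑ i ∈ T, gapCost k p T i := hsum.symm
    _ ≤ ∑ i ∈ P, gapCost k p T i := by
        apply Finset.sum_le_sum_of_subset_of_nonneg hTP
        intro i _ _
        unfold gapCost
        split_ifs <;> norm_num
end

section
/- Let m, n ≥ 1, let A be an m×n real matrix, and let x ∈ [0,1]^n be a vector having at least m + 2 entries x_i with 0 < x_i < 1. Then there exists x' ∈ [0,1]^n with Ax' = Ax, ∑_{i=1}^n x'_i = ∑_{i=1}^n x_i, and strictly fewer entries in the open interval (0,1) than x has. -/
/-- **One sparsification step.** If `x ∈ [0,1]^n` has at least `m + 2` fractional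
entries (entries strictly between `0` and `1`), then there is `x' ∈ [0,1]^n` with
`Ax' = Ax`, the same coordinate sum, and strictly fewer fractional entries. -/
theorem sparsify_step
    (m n : ℕ) (hm : 1 ≤ m) (hn : 1 ≤ n)
    (A : Matrix (Fin m) (Fin n) ℝ)
    (x : Fin n → ℝ)
    (hx : ∀ i, x i ∈ Set.Icc (0 : ℝ) 1)
    (hfrac : m + 2 ≤ {i : Fin n | 0 < x i ∧ x i < 1}.ncard) :
    ∃ x' : Fin n → ℝ,
      (∀ i, x' i ∈ Set.Icc (0 : ℝ) 1) ∧
      A.mulVec x' = A.mulVec x ∧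
      (∑ i, x' i = ∑ i, x i) ∧
      {i : Fin n | 0 < x' i ∧ x' i < 1}.ncard < {i : Fin n | 0 < x i ∧ x i < 1}.ncard := by
  classical
  set S : Finset (Fin n) := Finset.univ.filter (fun i => 0 < x i ∧ x i < 1) with hS
  have hsetS : {i : Fin n | 0 < x i ∧ x i < 1} = (↑S : Set (Fin n)) := by
    ext i; simp [hS]
  have hcardS : m + 2 ≤ S.card := by
    rwa [hsetS, Set.ncard_coe_finset] at hfrac
  -- vectors (column of A, 1)
  set v : Fin n → (Fin m → ℝ) × ℝ := fun i => (fun j => A j i, (1 : ℝ)) with hv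
  have hdep : ¬ LinearIndependent ℝ (fun i : S => v i) := by
    intro hli
    have h1 := hli.fintype_card_le_finrank
    have h2 : Module.finrank ℝ ((Fin m → ℝ) × ℝ) = m + 1 := by
      simp [Module.finrank_prod]
    rw [Fintype.card_coe, h2] at h1
    omega
  rw [Fintype.not_linearIndependent_iff] at hdep
  obtain ⟨g, hgsum, i₁, hgi₁⟩ := hdep
  set ε : Fin n → ℝ := fun i => if h : i ∈ S then g ⟨i, h⟩ else 0 with hε
  have hεS : ∀ i, ε i ≠ 0 → i ∈ S := by
    intro i h
    by_contra hc
    exact h (by simp [hε, hc])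
  have hεsum : ∑ i, ε i • v i = 0 := by
    have h1 : ∑ i, ε i • v i = ∑ i ∈ S, ε i • v i := by
      refine (Finset.sum_subset (Finset.subset_univ S) ?_).symm
      intro i _ hi
      simp [hε, hi]
    rw [h1, ← Finset.sum_attach S (fun i => ε i • v i)]
    rw [← hgsum]
    refine Finset.sum_congr rfl ?_
    intro i _
    simp [hε, i.2]
  have hA : ∀ j, ∑ i, ε i * A j i = 0 := by
    intro j
    have := congrArg (fun p => p.1 j) hεsum
    simpa [Prod.fst_sum, Finset.sum_apply, hv, smul_eq_mul] using this
  have hsum0 : ∑ i, ε i = 0 := by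
    have := congrArg Prod.snd hεsum
    simpa [Prod.snd_sum, hv, smul_eq_mul] using this
  have hεne : ∃ i, ε i ≠ 0 := ⟨i₁, by simpa [hε, i₁.2] using hgi₁⟩
  -- the set of moving coordinates
  set F : Finset (Fin n) := Finset.univ.filter (fun i => ε i ≠ 0) with hF
  have hFne : F.Nonempty := by
    obtain ⟨i, hi⟩ := hεne
    exact ⟨i, by simp [hF, hi]⟩
  set b : Fin n → ℝ := fun i => if 0 < ε i then (1 - x i) / ε i else x i / (-ε i) with hb
  obtain ⟨i₀, hi₀F, hi₀min⟩ := F.exists_min_image b hFne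
  set t : ℝ := b i₀ with ht
  have hmemS : ∀ i ∈ F, 0 < x i ∧ x i < 1 := by
    intro i hi
    have : i ∈ S := hεS i (by simpa [hF] using hi)
    simpa [hS] using this
  have hεi₀ : ε i₀ ≠ 0 := by simpa [hF] using hi₀F
  have hxi₀ := hmemS i₀ hi₀F
  have htpos : 0 < t := by
    rw [ht, hb]
    rcases lt_or_gt_of_ne hεi₀ with hneg | hpos
    · simp only [if_neg (not_lt.mpr hneg.le)]
      exact div_pos hxi₀.1 (by linarith)
    · simp only [if_pos hpos]
      exact div_pos (by linarith [hxi₀.2]) hpos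
  set x' : Fin n → ℝ := fun i => x i + t * ε i with hx'
  have hbound : ∀ i, x' i ∈ Set.Icc (0:ℝ) 1 := by
    intro i
    by_cases hεi : ε i = 0
    · simpa [hx', hεi] using hx i
    · have hiF : i ∈ F := by simp [hF, hεi]
      have hxi := hmemS i hiF
      have hti : t ≤ b i := hi₀min i hiF
      rcases lt_or_gt_of_ne hεi with hneg | hpos
      · have hbi : b i = x i / (-ε i) := by simp [hb, not_lt.mpr hneg.le]
        rw [hbi] at hti
        have h1 : t * (-ε i) ≤ x i := (le_div_iff₀ (by linarith)).mp hti
        constructor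
        · simp only [hx']; nlinarith
        · have : t * ε i < 0 := mul_neg_of_pos_of_neg htpos hneg
          simp only [hx']; linarith [hxi.2]
      · have hbi : b i = (1 - x i) / ε i := by simp [hb, hpos]
        rw [hbi] at hti
        have h1 : t * ε i ≤ 1 - x i := (le_div_iff₀ hpos).mp hti
        constructor
        · have : 0 < t * ε i := mul_pos htpos hpos
          simp only [hx']; linarith [hxi.1]
        · simp only [hx']; linarith
  have hi₀boundary : x' i₀ = 0 ∨ x' i₀ = 1 := by
    rcases lt_or_gt_of_ne hεi₀ with hneg | hpos
    · left
      have hbi : t = x i₀ / (-ε i₀) := by simp [ht, hb, not_lt.mpr hneg.le]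
      simp only [hx', hbi]
      rw [div_neg, neg_mul, div_mul_cancel₀ _ hεi₀]
      ring
    · right
      have hbi : t = (1 - x i₀) / ε i₀ := by simp [ht, hb, hpos]
      simp only [hx', hbi]
      rw [div_mul_cancel₀ _ hεi₀]
      ring
  refine ⟨x', hbound, ?_, ?_, ?_⟩
  · ext j
    simp only [Matrix.mulVec, dotProduct, hx']
    have : ∑ i, A j i * (x i + t * ε i)
        = ∑ i, A j i * x i + t * ∑ i, ε i * A j i := by
      rw [Finset.mul_sum, ← Finset.sum_add_distrib]
      exact Finset.sum_congr rfl fun i _ => by ring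
    rw [this, hA j]
    ring
  · have : ∑ i, (x i + t * ε i) = ∑ i, x i + t * ∑ i, ε i := by
      rw [Finset.mul_sum, ← Finset.sum_add_distrib]
    simp only [hx']
    rw [this, hsum0]
    ring
  · rw [hsetS, Set.ncard_coe_finset]
    have hsub : {i : Fin n | 0 < x' i ∧ x' i < 1} ⊆ (↑(S.erase i₀) : Set (Fin n)) := by
      intro i hi
      simp only [Set.mem_setOf_eq] at hi
      simp only [Finset.coe_erase, Set.mem_diff, Set.mem_singleton_iff]
      constructor
      · by_cases hεi : ε i = 0
        · have : x' i = x i := by simp [hx', hεi]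
          rw [this] at hi
          simp [hS, hi]
        · exact hεS i hεi
      · intro hcon
        subst hcon
        rcases hi₀boundary with h | h <;> rw [h] at hi <;> linarith [hi.1, hi.2]
    calc {i : Fin n | 0 < x' i ∧ x' i < 1}.ncard
        ≤ (↑(S.erase i₀) : Set (Fin n)).ncard :=
          Set.ncard_le_ncard hsub (Finset.finite_toSet _)
      _ = (S.erase i₀).card := Set.ncard_coe_finset _
      _ < S.card := Finset.card_erase_lt_of_mem (hεS i₀ hεi₀)
end
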